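/- arXiv:1812.09278 — 10 statements merged into one kernel-verified Lean document; each statement's English description precedes it below -/
import Mathlib

section
/- Fix N ≥ 1 and index the 2N qubit sites of two copies of an N-qubit system by Fin N ⊕ Fin N; the Hilbert space operators are matrices indexed by basis states (Fin N ⊕ Fin N) → Fin 2. For A : Matrix (Fin 2) (Fin 2) ℂ and a site s, let M s A be the matrix whose (f,g)-entry is A (f s) (g s) when f t = g t for all t ≠ s, and 0 otherwise. Set XX_o := M (Sum.inl o) σx * M (Sum.inr o) σx and ZZ_o := M (Sum.inl o) σz * M (Sum.inr o) σz for o ∈ Fin N. Then: (a) all the operators XX_o, ZZ_{o'} (o, o' ∈ Fin N) pairwise commute, i.e. XX_o * XX_{o'} = XX_{o'} * XX_o, ZZ_o * ZZ_{o'} = ZZ_{o'} * ZZ_o, and XX_o * ZZ_{o'} = ZZ_{o'} * XX_o; (b) for every P : Fin N → Matrix (Fin 2) (Fin 2) ℂ with each P o ∈ {1, σx, σy, σz}, the doubled operator A_P := (∏_{o ∈ Fin N} M (Sum.inl o) (P o)) * (∏_{o ∈ Fin N} M (Sum.inr o) (P o)) (the factors act on distinct sites and hence commute, so the product is well defined,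 e.g. as a Finset.noncommProd) commutes with XX_o and with ZZ_o for every o ∈ Fin N. -/
open Matrix

/-- The 2N qubit sites of two copies of an N-qubit system. -/
abbrev Site (N : ℕ) := Fin N ⊕ Fin N

/-- Computational basis states of the 2N qubits. -/
abbrev BasisState (N : ℕ) := Site N → Fin 2

noncomputable def sigmaX : Matrix (Fin 2) (Fin 2) ℂ := !![0, 1; 1, 0]
noncomputable def sigmaY : Matrix (Fin 2) (Fin 2) ℂ := !![0, -Complex.I; Complex.I, 0]
noncomputable def sigmaZ : Matrix (Fin 2) (Fin 2) ℂ := !![1, 0; 0, -1]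

/-- The one-qubit operator `A` acting on site `s`. -/
noncomputable def siteOp (N : ℕ) (s : Site N) (A : Matrix (Fin 2) (Fin 2) ℂ) :
    Matrix (BasisState N) (BasisState N) ℂ :=
  fun f g => if ∀ t, t ≠ s → f t = g t then A (f s) (g s) else 0

/-- The transversal Bell operator `X_{1,o} X_{2,o}`. -/
noncomputable def XXop (N : ℕ) (o : Fin N) : Matrix (BasisState N) (BasisState N) ℂ :=
  siteOp N (Sum.inl o) sigmaX * siteOp N (Sum.inr o) sigmaX

/-- The transversal Bell operator `Z_{1,o} Z_{2,o}`. -/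
noncomputable def ZZop (N : ℕ) (o : Fin N) : Matrix (BasisState N) (BasisState N) ℂ :=
  siteOp N (Sum.inl o) sigmaZ * siteOp N (Sum.inr o) sigmaZ

/-- The doubled operator `P̄ ⊗ P̄`: the product of the single-site factors `P o` over all
sites of the first copy times the product over all sites of the second copy (the factors
act on distinct sites, hence commute, so the products are order-independent). -/
noncomputable def doubledOp (N : ℕ) (P : Fin N → Matrix (Fin 2) (Fin 2) ℂ) :
    Matrix (BasisState N) (BasisState N) ℂ :=
  (((List.finRange N).map fun o => siteOp N (Sum.inl o) (P o)).prod) *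
  (((List.finRange N).map fun o => siteOp N (Sum.inr o) (P o)).prod)

lemma siteOp_mul_apply_ne {N : ℕ} {s s' : Site N} (h : s ≠ s')
    (A B : Matrix (Fin 2) (Fin 2) ℂ) (f g : BasisState N) :
    (siteOp N s A * siteOp N s' B) f g =
      if ∀ t, t ≠ s → t ≠ s' → f t = g t then A (f s) (g s) * B (f s') (g s') else 0 := by
  rw [Matrix.mul_apply]
  by_cases hC : ∀ t, t ≠ s → t ≠ s' → f t = g t
  · rw [if_pos hC, Finset.sum_eq_single (Function.update f s (g s))]
    · simp only [siteOp]
      rw [if_pos, if_pos]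
      · rw [Function.update_self, Function.update_of_ne (Ne.symm h)]
      · intro t ht
        by_cases hts : t = s
        · subst hts; rw [Function.update_self]
        · rw [Function.update_of_ne hts]; exact hC t hts ht
      · intro t ht
        rw [Function.update_of_ne ht]
    · intro b _ hb
      simp only [siteOp]
      by_cases h1 : ∀ t, t ≠ s → f t = b t
      · by_cases h2 : ∀ t, t ≠ s' → b t = g t
        · exfalso; apply hb; funext t
          by_cases hts : t = s
          · subst hts
            rw [Function.update_self]; exact h2 t h
          · rw [Function.update_of_ne hts]
            exact (h1 t hts).symm
        · rw [if_neg h2, mul_zero]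
      · rw [if_neg h1, zero_mul]
    · intro hmem; exact absurd (Finset.mem_univ _) hmem
  · rw [if_neg hC]
    apply Finset.sum_eq_zero
    intro b _
    simp only [siteOp]
    by_cases h1 : ∀ t, t ≠ s → f t = b t
    · by_cases h2 : ∀ t, t ≠ s' → b t = g t
      · exact absurd (fun t hts hts' => (h1 t hts).trans (h2 t hts')) hC
      · rw [if_neg h2, mul_zero]
    · rw [if_neg h1, zero_mul]

lemma siteOp_comm {N : ℕ} {s s' : Site N} (h : s ≠ s')
    (A B : Matrix (Fin 2) (Fin 2) ℂ) :
    Commute (siteOp N s A) (siteOp N s' B) := by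
  show _ = _
  ext f g
  rw [siteOp_mul_apply_ne h, siteOp_mul_apply_ne (Ne.symm h)]
  have hiff : (∀ t, t ≠ s → t ≠ s' → f t = g t) ↔ (∀ t, t ≠ s' → t ≠ s → f t = g t) :=
    ⟨fun H t h1 h2 => H t h2 h1, fun H t h1 h2 => H t h2 h1⟩
  rw [if_congr hiff (mul_comm _ _) rfl]

lemma siteOp_mul_same {N : ℕ} (s : Site N) (A B : Matrix (Fin 2) (Fin 2) ℂ) :
    siteOp N s A * siteOp N s B = siteOp N s (A * B) := by
  ext f g
  rw [Matrix.mul_apply]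
  simp only [siteOp]
  by_cases hD : ∀ t, t ≠ s → f t = g t
  · rw [if_pos hD, Matrix.mul_apply]
    rw [show (Finset.univ : Finset (BasisState N)) =
        Finset.image (fun k : Fin 2 => Function.update f s k) Finset.univ ∪
          ((Finset.univ : Finset (BasisState N)) \
            Finset.image (fun k : Fin 2 => Function.update f s k) Finset.univ) from
        (Finset.union_sdiff_of_subset (Finset.subset_univ _)).symm]
    rw [Finset.sum_union (Finset.disjoint_sdiff)]
    have h2 : ∀ b ∈ (Finset.univ : Finset (BasisState N)) \
        Finset.image (fun k : Fin 2 => Function.update f s k) Finset.univ,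
        (if ∀ t, t ≠ s → f t = b t then A (f s) (b s) else 0) *
          (if ∀ t, t ≠ s → b t = g t then B (b s) (g s) else 0) = 0 := by
      intro b hb
      rw [Finset.mem_sdiff, Finset.mem_image] at hb
      by_cases h1 : ∀ t, t ≠ s → f t = b t
      · exfalso
        apply hb.2
        exact ⟨b s, Finset.mem_univ _, by
          funext t
          by_cases hts : t = s
          · subst hts; rw [Function.update_self]
          · rw [Function.update_of_ne hts]; exact h1 t hts⟩
      · rw [if_neg h1, zero_mul]
    rw [Finset.sum_eq_zero h2, add_zero]
    rw [Finset.sum_image (by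
      intro x _ y _ hxy
      have := congrFun hxy s
      simpa using this)]
    congr 1
    funext k
    rw [if_pos, if_pos]
    · rw [Function.update_self]
    · intro t ht
      rw [Function.update_of_ne ht]; exact hD t ht
    · intro t ht
      rw [Function.update_of_ne ht]
  · rw [if_neg hD]
    apply Finset.sum_eq_zero
    intro b _
    by_cases h1 : ∀ t, t ≠ s → f t = b t
    · by_cases h2 : ∀ t, t ≠ s → b t = g t
      · exact absurd (fun t hts => (h1 t hts).trans (h2 t hts)) hD
      · rw [if_neg h2, mul_zero]
    · rw [if_neg h1, zero_mul]

lemma siteOp_smul {N : ℕ} (s : Site N) (c : ℂ) (A : Matrix (Fin 2) (Fin 2) ℂ) :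
    siteOp N s (c • A) = c • siteOp N s A := by
  ext f g
  simp only [siteOp, Matrix.smul_apply]
  split <;> simp

/-- Interchange of the two copies: merging products over a single list. -/
lemma prod_interleave {N : ℕ} (P : Fin N → Matrix (Fin 2) (Fin 2) ℂ) (l : List (Fin N)) :
    ((l.map fun o => siteOp N (Sum.inl o) (P o)).prod) *
      ((l.map fun o => siteOp N (Sum.inr o) (P o)).prod) =
      (l.map fun o => siteOp N (Sum.inl o) (P o) * siteOp N (Sum.inr o) (P o)).prod := by
  induction l with
  | nil => simp
  | cons a t ih =>
    simp only [List.map_cons, List.prod_cons]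
    have hc : Commute ((t.map fun o => siteOp N (Sum.inl o) (P o)).prod)
        (siteOp N (Sum.inr a) (P a)) := by
      apply Commute.list_prod_left
      intro y hy
      simp only [List.mem_map] at hy
      obtain ⟨o, _, rfl⟩ := hy
      exact siteOp_comm (by simp) _ _
    calc siteOp N (Sum.inl a) (P a) * (t.map fun o => siteOp N (Sum.inl o) (P o)).prod *
          (siteOp N (Sum.inr a) (P a) * (t.map fun o => siteOp N (Sum.inr o) (P o)).prod)
        = siteOp N (Sum.inl a) (P a) *
            ((t.map fun o => siteOp N (Sum.inl o) (P o)).prod * siteOp N (Sum.inr a) (P a)) *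
            (t.map fun o => siteOp N (Sum.inr o) (P o)).prod := by
          simp only [mul_assoc]
      _ = siteOp N (Sum.inl a) (P a) *
            (siteOp N (Sum.inr a) (P a) * (t.map fun o => siteOp N (Sum.inl o) (P o)).prod) *
            (t.map fun o => siteOp N (Sum.inr o) (P o)).prod := by rw [hc.eq]
      _ = siteOp N (Sum.inl a) (P a) * siteOp N (Sum.inr a) (P a) *
            ((t.map fun o => siteOp N (Sum.inl o) (P o)).prod *
              (t.map fun o => siteOp N (Sum.inr o) (P o)).prod) := by
          simp only [mul_assoc]
      _ = _ := by rw [ih]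

/-- Merging the two same-`o` two-site factors. -/
lemma pair_mul {N : ℕ} (o : Fin N) (U V : Matrix (Fin 2) (Fin 2) ℂ) :
    (siteOp N (Sum.inl o) U * siteOp N (Sum.inr o) U) *
      (siteOp N (Sum.inl o) V * siteOp N (Sum.inr o) V) =
      siteOp N (Sum.inl o) (U * V) * siteOp N (Sum.inr o) (U * V) := by
  have hc : Commute (siteOp N (Sum.inr o) U) (siteOp N (Sum.inl o) V) :=
    siteOp_comm (by simp) _ _
  calc (siteOp N (Sum.inl o) U * siteOp N (Sum.inr o) U) *
        (siteOp N (Sum.inl o) V * siteOp N (Sum.inr o) V)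
      = siteOp N (Sum.inl o) U * (siteOp N (Sum.inr o) U * siteOp N (Sum.inl o) V) *
          siteOp N (Sum.inr o) V := by simp only [mul_assoc]
    _ = siteOp N (Sum.inl o) U * (siteOp N (Sum.inl o) V * siteOp N (Sum.inr o) U) *
          siteOp N (Sum.inr o) V := by rw [hc.eq]
    _ = (siteOp N (Sum.inl o) U * siteOp N (Sum.inl o) V) *
          (siteOp N (Sum.inr o) U * siteOp N (Sum.inr o) V) := by simp only [mul_assoc]
    _ = _ := by rw [siteOp_mul_same, siteOp_mul_same]

/-- If `A * Q = ε • (Q * A)` with `ε² = 1`, the doubled operators commute. -/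
lemma double_comm {N : ℕ} (o : Fin N) {A Q : Matrix (Fin 2) (Fin 2) ℂ} (ε : ℂ)
    (hε : ε * ε = 1) (hAQ : A * Q = ε • (Q * A)) :
    Commute (siteOp N (Sum.inl o) A * siteOp N (Sum.inr o) A)
      (siteOp N (Sum.inl o) Q * siteOp N (Sum.inr o) Q) := by
  show _ = _
  rw [pair_mul, pair_mul, hAQ, siteOp_smul, siteOp_smul, smul_mul_assoc, mul_smul_comm,
    smul_smul, hε, one_smul]

/-- Commutation when all four sites are distinct in pairs across the two operators. -/
lemma comm_of_ne {N : ℕ} {s1 s2 s3 s4 : Site N} (h13 : s1 ≠ s3) (h14 : s1 ≠ s4)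
    (h23 : s2 ≠ s3) (h24 : s2 ≠ s4) (A B C D : Matrix (Fin 2) (Fin 2) ℂ) :
    Commute (siteOp N s1 A * siteOp N s2 B) (siteOp N s3 C * siteOp N s4 D) :=
  Commute.mul_left
    (Commute.mul_right (siteOp_comm h13 _ _) (siteOp_comm h14 _ _))
    (Commute.mul_right (siteOp_comm h23 _ _) (siteOp_comm h24 _ _))

lemma pauli_sign {A : Matrix (Fin 2) (Fin 2) ℂ}
    (hA : A ∈ ({1, sigmaX, sigmaY, sigmaZ} : Set (Matrix (Fin 2) (Fin 2) ℂ)))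
    {Q : Matrix (Fin 2) (Fin 2) ℂ}
    (hQ : Q ∈ ({sigmaX, sigmaZ} : Set (Matrix (Fin 2) (Fin 2) ℂ))) :
    ∃ ε : ℂ, ε * ε = 1 ∧ A * Q = ε • (Q * A) := by
  have hx : sigmaX * sigmaZ = (-1 : ℂ) • (sigmaZ * sigmaX) := by
    ext i j; fin_cases i <;> fin_cases j <;>
      simp [sigmaX, sigmaZ, Matrix.mul_apply, Fin.sum_univ_two]
  have hyx : sigmaY * sigmaX = (-1 : ℂ) • (sigmaX * sigmaY) := by
    ext i j; fin_cases i <;> fin_cases j <;>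
      simp [sigmaX, sigmaY, Matrix.mul_apply, Fin.sum_univ_two]
  have hyz : sigmaY * sigmaZ = (-1 : ℂ) • (sigmaZ * sigmaY) := by
    ext i j; fin_cases i <;> fin_cases j <;>
      simp [sigmaY, sigmaZ, Matrix.mul_apply, Fin.sum_univ_two]
  have hzx : sigmaZ * sigmaX = (-1 : ℂ) • (sigmaX * sigmaZ) := by
    ext i j; fin_cases i <;> fin_cases j <;>
      simp [sigmaX, sigmaZ, Matrix.mul_apply, Fin.sum_univ_two]
  rcases hA with rfl | rfl | rfl | rfl <;> rcases hQ with rfl | rfl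
  · exact ⟨1, by norm_num, by rw [one_mul, mul_one, one_smul]⟩
  · exact ⟨1, by norm_num, by rw [one_mul, mul_one, one_smul]⟩
  · exact ⟨1, by norm_num, by rw [one_smul]⟩
  · exact ⟨-1, by norm_num, hx⟩
  · exact ⟨-1, by norm_num, hyx⟩
  · exact ⟨-1, by norm_num, hyz⟩
  · exact ⟨-1, by norm_num, hzx⟩
  · exact ⟨1, by norm_num, by rw [one_smul]⟩

/-- The doubled operator commutes with the same-site doubled single-qubit operator. -/
lemma doubled_comm {N : ℕ} (P : Fin N → Matrix (Fin 2) (Fin 2) ℂ)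
    (hP : ∀ o, P o ∈ ({1, sigmaX, sigmaY, sigmaZ} : Set (Matrix (Fin 2) (Fin 2) ℂ)))
    (o : Fin N) {Q : Matrix (Fin 2) (Fin 2) ℂ}
    (hQ : Q ∈ ({sigmaX, sigmaZ} : Set (Matrix (Fin 2) (Fin 2) ℂ))) :
    Commute (doubledOp N P) (siteOp N (Sum.inl o) Q * siteOp N (Sum.inr o) Q) := by
  rw [doubledOp, prod_interleave]
  apply Commute.list_prod_left
  intro y hy
  simp only [List.mem_map] at hy
  obtain ⟨o', _, rfl⟩ := hy
  by_cases ho : o' = o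
  · subst ho
    obtain ⟨ε, hε, hAQ⟩ := pauli_sign (hP o') hQ
    exact double_comm o' ε hε hAQ
  · exact comm_of_ne (by simp [ho]) (by simp) (by simp) (by simp [ho]) _ _ _ _

/-- Theorem 1 (core): the transversal Bell operators `XX_o`, `ZZ_{o'}` pairwise commute,
and every doubled Pauli operator `P̄ ⊗ P̄` commutes with all of them. -/
theorem transversal_bell_operators_commute (N : ℕ) (hN : 1 ≤ N) :
    (∀ o o' : Fin N, XXop N o * XXop N o' = XXop N o' * XXop N o) ∧
    (∀ o o' : Fin N, ZZop N o * ZZop N o' = ZZop N o' * ZZop N o) ∧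
    (∀ o o' : Fin N, XXop N o * ZZop N o' = ZZop N o' * XXop N o) ∧
    (∀ P : Fin N → Matrix (Fin 2) (Fin 2) ℂ,
      (∀ o, P o ∈ ({1, sigmaX, sigmaY, sigmaZ} : Set (Matrix (Fin 2) (Fin 2) ℂ))) →
      ∀ o : Fin N,
        doubledOp N P * XXop N o = XXop N o * doubledOp N P ∧
        doubledOp N P * ZZop N o = ZZop N o * doubledOp N P) := by
  have hxmem : sigmaX ∈ ({sigmaX, sigmaZ} : Set (Matrix (Fin 2) (Fin 2) ℂ)) := Or.inl rfl
  have hzmem : sigmaZ ∈ ({sigmaX, sigmaZ} : Set (Matrix (Fin 2) (Fin 2) ℂ)) := Or.inr rfl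
  have hxA : sigmaX ∈ ({1, sigmaX, sigmaY, sigmaZ} : Set (Matrix (Fin 2) (Fin 2) ℂ)) :=
    Or.inr (Or.inl rfl)
  have hzA : sigmaZ ∈ ({1, sigmaX, sigmaY, sigmaZ} : Set (Matrix (Fin 2) (Fin 2) ℂ)) :=
    Or.inr (Or.inr (Or.inr rfl))
  have key : ∀ (A B : Matrix (Fin 2) (Fin 2) ℂ),
      A ∈ ({1, sigmaX, sigmaY, sigmaZ} : Set (Matrix (Fin 2) (Fin 2) ℂ)) →
      B ∈ ({sigmaX, sigmaZ} : Set (Matrix (Fin 2) (Fin 2) ℂ)) →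
      ∀ o o' : Fin N,
        Commute (siteOp N (Sum.inl o) A * siteOp N (Sum.inr o) A)
          (siteOp N (Sum.inl o') B * siteOp N (Sum.inr o') B) := by
    intro A B hA hB o o'
    by_cases ho : o = o'
    · subst ho
      obtain ⟨ε, hε, hAQ⟩ := pauli_sign hA hB
      exact double_comm o ε hε hAQ
    · exact comm_of_ne (by simp [ho]) (by simp) (by simp) (by simp [ho]) _ _ _ _
  refine ⟨fun o o' => ?_, fun o o' => ?_, fun o o' => ?_, fun P hP o => ?_⟩
  · exact (key sigmaX sigmaX hxA hxmem o o').eq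
  · exact (key sigmaZ sigmaZ hzA hzmem o o').eq
  · exact (key sigmaX sigmaZ hxA hzmem o o').eq
  · exact ⟨(doubled_comm P hP o hxmem).eq, (doubled_comm P hP o hzmem).eq⟩
end

section
/- Let C_X, C_Z ⊆ F₂^N be subspaces with C_X^⊥ ⊆ C_Z and dim C_Z = dim C_X^⊥ + 1 (one encoded logical qubit), and let x ∈ C_Z \ C_X^⊥. Then 2 * Nat.card {b ∈ C_Z | ∃ x' ∈ x + C_X^⊥, ∀ i ∈ supp(x'), b i = 1} ≥ Nat.card C_Z. In other words, with ZZ=1 Bell measurements on all qubit pairs, the loss-free logical Bell-measurement efficiency of an [N,1,d] CSS code is at least 1/2. -/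
def pairing {N : ℕ} (u v : Fin N → ZMod 2) : ZMod 2 := ∑ i, u i * v i

def dualCode {N : ℕ} (C : Submodule (ZMod 2) (Fin N → ZMod 2)) :
    Submodule (ZMod 2) (Fin N → ZMod 2) where
  carrier := {u | ∀ c ∈ C, pairing u c = 0}
  add_mem' := by
    intro a b ha hb c hc
    have h : pairing (a + b) c = pairing a c + pairing b c := by
      simp [pairing, add_mul, Finset.sum_add_distrib]
    simp only [Set.mem_setOf_eq] at *
    rw [h, ha c hc, hb c hc, add_zero]
  zero_mem' := by
    intro c hc
    simp [pairing]
  smul_mem' := by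
    intro r a ha c hc
    have h : pairing (r • a) c = r * pairing a c := by
      simp [pairing, Finset.mul_sum, mul_assoc]
    simp only [Set.mem_setOf_eq] at *
    rw [h, ha c hc, mul_zero]

/-- Theorem 2: with ZZ=1 Bell measurements on all qubit pairs, the loss-free logical
Bell-measurement efficiency of an [N,1,d] CSS code is at least 1/2. -/
theorem css_zz1_efficiency_lower_bound (N : ℕ)
    (CX CZ : Submodule (ZMod 2) (Fin N → ZMod 2))
    (hCSS : dualCode CX ≤ CZ)
    (hdim : Module.finrank (ZMod 2) CZ = Module.finrank (ZMod 2) (dualCode CX) + 1)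
    (x : Fin N → ZMod 2) (hx : x ∈ CZ) (hx' : x ∉ dualCode CX) :
    2 * Nat.card {b : Fin N → ZMod 2 | b ∈ CZ ∧
        ∃ x' : Fin N → ZMod 2, x' - x ∈ dualCode CX ∧ ∀ i, x' i = 1 → b i = 1}
      ≥ Nat.card CZ := by
  classical
  set D := dualCode CX with hD
  set S := {b : Fin N → ZMod 2 | b ∈ CZ ∧
      ∃ x' : Fin N → ZMod 2, x' - x ∈ D ∧ ∀ i, x' i = 1 → b i = 1} with hS
  -- injection from D into S: d ↦ x + d
  have hf : ∀ d : D, (x + (d : Fin N → ZMod 2)) ∈ S := by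
    intro d
    refine ⟨CZ.add_mem hx (hCSS d.2), x + d, ?_, fun i h => h⟩
    simpa using d.2
  have hinj : Function.Injective (fun d : D => (⟨x + d, hf d⟩ : S)) := by
    intro a b hab
    simp only [Subtype.mk.injEq] at hab
    exact Subtype.ext (add_left_cancel hab)
  have hcard : Nat.card D ≤ Nat.card S := Nat.card_le_card_of_injective _ hinj
  have hCZ : Nat.card CZ = 2 ^ (Module.finrank (ZMod 2) CZ) := by
    rw [Nat.card_eq_fintype_card, Module.card_eq_pow_finrank (K := ZMod 2), ZMod.card]
  have hDc : Nat.card D = 2 ^ (Module.finrank (ZMod 2) D) := by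
    rw [Nat.card_eq_fintype_card, Module.card_eq_pow_finrank (K := ZMod 2), ZMod.card]
  rw [hCZ, hdim, pow_succ, mul_comm]
  have : (2 : ℕ) ^ Module.finrank (ZMod 2) D ≤ Nat.card S := hDc ▸ hcard
  omega
end

section
/- Let C ⊆ F₂^N be a subspace with C^⊥ ⊆ C and dim C = dim C^⊥ + 1, and let x ∈ C \ C^⊥. Then 2 * Nat.card {b ∈ C | ∃ x' ∈ x + C^⊥, ∀ i ∈ supp(x'), b i = 1} ≤ Nat.card C. In other words, for an [N,1,d] CSS code with C_X = C_Z = C (for instance any two-dimensional planar color code), the loss-free logical Bell-measurement efficiency with identical guaranteed-information (ZZ=1) Bell measurements on all qubit pairs is at most 1/2. -/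
private lemma pairing_comm {N : ℕ} (u v : Fin N → ZMod 2) : pairing u v = pairing v u := by
  simp [pairing, mul_comm]

private lemma pairing_sub_left {N : ℕ} (u v w : Fin N → ZMod 2) :
    pairing (u - v) w = pairing u w - pairing v w := by
  simp [pairing, sub_mul, Finset.sum_sub_distrib]

private lemma pairing_add_left {N : ℕ} (u v w : Fin N → ZMod 2) :
    pairing (u + v) w = pairing u w + pairing v w := by
  simp [pairing, add_mul, Finset.sum_add_distrib]

/-- Corollary 1: for an [N,1,d] CSS code with C_X = C_Z = C (e.g. any two-dimensional
planar color code), the loss-free logical Bell-measurement efficiency with identical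
ZZ=1 Bell measurements on all qubit pairs is at most 1/2. -/
theorem color_code_zz1_upper_bound (N : ℕ)
    (C : Submodule (ZMod 2) (Fin N → ZMod 2))
    (hself : dualCode C ≤ C)
    (hdim : Module.finrank (ZMod 2) C = Module.finrank (ZMod 2) (dualCode C) + 1)
    (x : Fin N → ZMod 2) (hx : x ∈ C) (hx' : x ∉ dualCode C) :
    2 * Nat.card {b : Fin N → ZMod 2 | b ∈ C ∧
        ∃ x' : Fin N → ZMod 2, x' - x ∈ dualCode C ∧ ∀ i, x' i = 1 → b i = 1}
      ≤ Nat.card C := by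
  classical
  -- extract a codeword pairing nontrivially with x
  have hex : ∃ c ∈ C, pairing x c ≠ 0 := by
    by_contra h
    push_neg at h
    exact hx' (fun c hc => h c hc)
  obtain ⟨c₀, hc₀C, hc₀⟩ := hex
  have hone : ∀ a : ZMod 2, a ≠ 0 → a = 1 := by decide
  have hc₀1 : pairing x c₀ = 1 := hone _ hc₀
  set S : Set (Fin N → ZMod 2) := {b | b ∈ C ∧
      ∃ x' : Fin N → ZMod 2, x' - x ∈ dualCode C ∧ ∀ i, x' i = 1 → b i = 1} with hS
  set T : Set (Fin N → ZMod 2) := {b | b ∈ C ∧ pairing x b = pairing x x} with hT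
  -- S ⊆ T
  have hST : S ⊆ T := by
    rintro b ⟨hbC, x', hx'd, hsupp⟩
    have hx'C : x' ∈ C := by
      have : (x' - x) + x ∈ C := C.add_mem (hself hx'd) hx
      simpa using this
    have h1 : pairing x' b = pairing x' x' := by
      have key : ∀ a c : ZMod 2, (a = 1 → c = 1) → a * c = a * a := by decide
      exact Finset.sum_congr rfl fun i _ => key _ _ (hsupp i)
    have h2 : pairing (x' - x) b = 0 := hx'd b hbC
    have h3 : pairing (x' - x) x' = 0 := hx'd x' hx'C
    have h4 : pairing (x' - x) x = 0 := hx'd x hx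
    have hxb : pairing x b = pairing x' x' := by
      have := pairing_sub_left x' x b
      rw [h2] at this
      have hx'b : pairing x' b = pairing x b := sub_eq_zero.mp this.symm
      rw [← hx'b, h1]
    have hxx : pairing x' x' = pairing x x := by
      have e1 : pairing x' x' = pairing x x' := by
        have := pairing_sub_left x' x x'
        rw [h3] at this
        exact sub_eq_zero.mp this.symm
      have e2 : pairing x x' = pairing x' x := pairing_comm _ _
      have e3 : pairing x' x = pairing x x := by
        have := pairing_sub_left x' x x
        rw [h4] at this
        exact sub_eq_zero.mp this.symm
      rw [e1, e2, e3]
    exact ⟨hbC, by rw [hxb, hxx]⟩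
  -- counting: T and T + c₀ are disjoint subsets of C of equal size
  have hTC : T ⊆ (C : Set _) := fun b hb => hb.1
  set T' : Set (Fin N → ZMod 2) := (fun b => b + c₀) '' T with hT'
  have hT'C : T' ⊆ (C : Set _) := by
    rintro _ ⟨b, hb, rfl⟩
    exact C.add_mem hb.1 hc₀C
  have hdisj : Disjoint T T' := by
    rw [Set.disjoint_left]
    rintro a haT ⟨b, hbT, rfl⟩
    have h1 : pairing x (b + c₀) = pairing x b + pairing x c₀ := by
      rw [pairing_comm, pairing_add_left, pairing_comm b x, pairing_comm c₀ x]
    have := haT.2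
    rw [h1, hbT.2, hc₀1] at this
    have : (1 : ZMod 2) = 0 := by linear_combination this
    exact one_ne_zero this
  have hfin : T.Finite := Set.toFinite T
  have hfin' : T'.Finite := Set.toFinite T'
  have hcardT' : T'.ncard = T.ncard :=
    Set.ncard_image_of_injective T (add_left_injective c₀)
  have hunion : (T ∪ T').ncard = T.ncard + T'.ncard :=
    Set.ncard_union_eq hdisj hfin hfin'
  have hle : (T ∪ T').ncard ≤ (C : Set _).ncard :=
    Set.ncard_le_ncard (Set.union_subset hTC hT'C) (Set.toFinite _)
  have hSle : S.ncard ≤ T.ncard := Set.ncard_le_ncard hST hfin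
  have hNC : Nat.card S = S.ncard := Nat.card_coe_set_eq S
  have hNCC : Nat.card C = ((C : Set (Fin N → ZMod 2))).ncard := rfl
  calc 2 * Nat.card S = S.ncard + S.ncard := by rw [hNC]; ring
    _ ≤ T.ncard + T'.ncard := by omega
    _ = (T ∪ T').ncard := hunion.symm
    _ ≤ ((C : Set (Fin N → ZMod 2))).ncard := hle
    _ = Nat.card C := hNCC.symm
end

section
/- Let C_X, C_Z ⊆ F₂^N be subspaces with C_X^⊥ ⊆ C_Z and let x ∈ C_Z \ C_X^⊥. Then Nat.card {b ∈ C_Z | ∃ x' ∈ x + C_X^⊥, ∀ i ∈ supp(x'), b i = 1} ≤ Nat.card C_Z − 1. Consequently, if dim C_Z = N − j (so that the code has j independent Z-stabilizer generators), the loss-free logical Bell-measurement efficiency with only ZZ=1 Bell measurements is at most 1 − 2^{−(N−j)}. -/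
/-!
The all-zero outcome string always fails: a manifestation of X̄ supported inside the empty set
would be `0`, putting `x` in `C_X^⊥`. Since `0` is a codeword of `C_Z`, at most `|C_Z| - 1` of
the `|C_Z| = 2^(N - j)` equiprobable outcome strings succeed.
-/

section BellMeasurement

variable {ι : Type*} (C D : Submodule (ZMod 2) (ι → ZMod 2)) {x : ι → ZMod 2}

/-- With `D = C_X^⊥`, the coset `x + D` is the set of manifestations of the logical X̄. -/
def bellSuccessOutcomes (x : ι → ZMod 2) : Set (ι → ZMod 2) :=
  {b | b ∈ C ∧ ∃ x' : ι → ZMod 2, x' - x ∈ D ∧ ∀ i, x' i = 1 → b i = 1}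

lemma zero_notMem_bellSuccessOutcomes (hx : x ∉ D) : 0 ∉ bellSuccessOutcomes C D x := by
  rintro ⟨-, x', hx'D, hsupp⟩
  have hF2 : ∀ a : ZMod 2, a ≠ 1 → a = 0 := by decide
  have hx'0 : x' = 0 := funext fun i => hF2 _ fun h => zero_ne_one (hsupp i h)
  exact hx (by simpa [hx'0] using D.neg_mem hx'D)

lemma card_bellSuccessOutcomes_lt [Finite ι] (hx : x ∉ D) :
    Nat.card (bellSuccessOutcomes C D x) < Nat.card C := by
  rw [Nat.card_coe_set_eq, ← SetLike.coe_sort_coe, Nat.card_coe_set_eq]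
  exact Set.ncard_lt_ncard
    ⟨fun b hb => hb.1, fun h => zero_notMem_bellSuccessOutcomes C D hx (h C.zero_mem)⟩

end BellMeasurement

lemma natCast_div_le_one_sub_inv {s c : ℕ} (h : s < c) : (s : ℝ) / c ≤ 1 - (c : ℝ)⁻¹ := by
  have hc : (0 : ℝ) < c := by exact_mod_cast (Nat.zero_le s).trans_lt h
  rw [le_sub_iff_add_le, inv_eq_one_div, ← add_div, div_le_one hc]
  exact_mod_cast Nat.succ_le_of_lt h

theorem css_zz1_upper_bound_general (N : ℕ)
    (CX CZ : Submodule (ZMod 2) (Fin N → ZMod 2))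
    (x : Fin N → ZMod 2) (hx' : x ∉ dualCode CX) :
    Nat.card {b : Fin N → ZMod 2 | b ∈ CZ ∧
        ∃ x' : Fin N → ZMod 2, x' - x ∈ dualCode CX ∧ ∀ i, x' i = 1 → b i = 1}
      ≤ Nat.card CZ - 1 ∧
    (∀ j : ℕ, j ≤ N → Module.finrank (ZMod 2) CZ = N - j →
      (Nat.card {b : Fin N → ZMod 2 | b ∈ CZ ∧
          ∃ x' : Fin N → ZMod 2, x' - x ∈ dualCode CX ∧ ∀ i, x' i = 1 → b i = 1} : ℝ)
        / (Nat.card CZ : ℝ)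
        ≤ 1 - (2 : ℝ) ^ (-((N : ℤ) - (j : ℤ)))) := by
  have hlt := card_bellSuccessOutcomes_lt CZ (dualCode CX) hx'
  refine ⟨Nat.le_sub_one_of_lt hlt, fun j hjN hrank => ?_⟩
  have hcard : Nat.card CZ = 2 ^ (N - j) := by
    rw [Module.natCard_eq_pow_finrank (K := ZMod 2), Nat.card_zmod, hrank]
  calc _ ≤ 1 - (Nat.card CZ : ℝ)⁻¹ := natCast_div_le_one_sub_inv hlt
    _ = _ := by
      rw [hcard, zpow_neg, ← Nat.cast_sub hjN, zpow_natCast, Nat.cast_pow, Nat.cast_ofNat]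

/-- Theorem 4: with only ZZ=1 Bell measurements, at least one ZZ-outcome string (the
all-zero codeword) fails, so the loss-free logical Bell-measurement efficiency of a CSS
code with j independent Z-stabilizer generators is at most 1 − 2^{−(N−j)}. -/
theorem css_zz1_upper_bound (N : ℕ)
    (CX CZ : Submodule (ZMod 2) (Fin N → ZMod 2))
    (hCSS : dualCode CX ≤ CZ)
    (x : Fin N → ZMod 2) (hx : x ∈ CZ) (hx' : x ∉ dualCode CX) :
    Nat.card {b : Fin N → ZMod 2 | b ∈ CZ ∧
        ∃ x' : Fin N → ZMod 2, x' - x ∈ dualCode CX ∧ ∀ i, x' i = 1 → b i = 1}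
      ≤ Nat.card CZ - 1 ∧
    (∀ j : ℕ, j ≤ N → Module.finrank (ZMod 2) CZ = N - j →
      (Nat.card {b : Fin N → ZMod 2 | b ∈ CZ ∧
          ∃ x' : Fin N → ZMod 2, x' - x ∈ dualCode CX ∧ ∀ i, x' i = 1 → b i = 1} : ℝ)
        / (Nat.card CZ : ℝ)
        ≤ 1 - (2 : ℝ) ^ (-((N : ℤ) - (j : ℤ)))) :=
  css_zz1_upper_bound_general N CX CZ x hx'
end

section
/- For all integers n, m ≥ 2, the number of pairs (a, b) ∈ C_X × C_Z on which the logical Bell measurement of QPC(n,m) with the mixed static linear-optics formation succeeds equals (1 − 2^{−(n+m−1)}) · 2^{n·m+1}; precisely, 2^{n+m−1} * Nat.card {(a,b) ∈ C_X × C_Z | ∀ (a',b') ∈ C_X × C_Z indistinguishable from (a,b), LX a' = LX a ∧ LZ b' = LZ b} = (2^{n+m−1} − 1) * 2^{n·m+1}. In other words, the loss-free logical Bell-measurement efficiency of QPC(n,m) with this formation is exactly 1 − 2^{−(n+m−1)}. -/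
/-- Possible transversal XX-outcome strings of QPC(n,m): all block parities equal. -/
def CXqpc (n m : ℕ) : Set ((Fin n × Fin m) → ZMod 2) :=
  {a | ∀ l l' : Fin n, ∑ j, a (l, j) = ∑ j, a (l', j)}

/-- Possible transversal ZZ-outcome strings of QPC(n,m): constant on each block. -/
def CZqpc (n m : ℕ) : Set ((Fin n × Fin m) → ZMod 2) :=
  {b | ∀ (l : Fin n) (j j' : Fin m), b (l, j) = b (l, j')}

/-- The logical XX outcome value. -/
def LXqpc (n m : ℕ) [NeZero n] (a : (Fin n × Fin m) → ZMod 2) : ZMod 2 :=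
  ∑ j, a (0, j)

/-- The logical ZZ outcome value. -/
def LZqpc (n m : ℕ) [NeZero m] (b : (Fin n × Fin m) → ZMod 2) : ZMod 2 :=
  ∑ l, b (l, 0)

/-- `(a', b')` produces the same observed data as `(a, b)` under the mixed formation:
YY=1 at site (0,0), XX=1 at sites (0,j) with j ≠ 0, and ZZ=1 at all sites (l,j), l ≠ 0. -/
def IndistQPC (n m : ℕ) [NeZero n] [NeZero m]
    (a b a' b' : (Fin n × Fin m) → ZMod 2) : Prop :=
  (a (0, 0) + b (0, 0) = a' (0, 0) + b' (0, 0)) ∧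
  (a (0, 0) + b (0, 0) = 1 → a' (0, 0) = a (0, 0) ∧ b' (0, 0) = b (0, 0)) ∧
  (∀ j : Fin m, j ≠ 0 →
    a' (0, j) = a (0, j) ∧ (a (0, j) = 1 → b' (0, j) = b (0, j))) ∧
  (∀ (l : Fin n) (j : Fin m), l ≠ 0 →
    b' (l, j) = b (l, j) ∧ (b (l, j) = 1 → a' (l, j) = a (l, j)))

/-- The logical Bell measurement succeeds on `(a, b)` iff the logical outcome values are
the same on every indistinguishable pair. -/
def SuccessQPC (n m : ℕ) [NeZero n] [NeZero m]
    (a b : (Fin n × Fin m) → ZMod 2) : Prop :=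
  ∀ a' b' : (Fin n × Fin m) → ZMod 2,
    a' ∈ CXqpc n m → b' ∈ CZqpc n m → IndistQPC n m a b a' b' →
      LXqpc n m a' = LXqpc n m a ∧ LZqpc n m b' = LZqpc n m b

lemma zmod2_sum_split {α} [Fintype α] [DecidableEq α] (f : α → ZMod 2) (a : α) :
    ∑ i, f i = f a + ∑ i : {i // i ≠ a}, f i := by
  rw [Fintype.sum_eq_add_sum_compl a f]
  congr 1
  exact Finset.sum_subtype _ (fun x => by simp) f

/-- The failure condition. -/
def Fqpc (n m : ℕ) [NeZero n] [NeZero m] (a b : (Fin n × Fin m) → ZMod 2) : Prop :=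
  a (0, 0) = b (0, 0) ∧ (∀ j : Fin m, j ≠ 0 → a (0, j) = 0) ∧
  (∀ l : Fin n, l ≠ 0 → ∀ j, b (l, j) = 0)

lemma success_iff (n m : ℕ) [NeZero n] [NeZero m] (a b : (Fin n × Fin m) → ZMod 2)
    (ha : a ∈ CXqpc n m) (hb : b ∈ CZqpc n m) :
    SuccessQPC n m a b ↔ ¬ Fqpc n m a b := by
  have z1 : ∀ x y : ZMod 2, x + y = (x + 1) + (y + 1) := by decide
  have z2 : ∀ x y : ZMod 2, x = y → x + y ≠ 1 := by decide
  have z3 : ∀ x : ZMod 2, x ≠ 0 → x = 1 := by decide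
  have z4 : ∀ x y : ZMod 2, x ≠ y → x + y = 1 := by decide
  have link : ∀ x y x' y' : ZMod 2, x + y = x' + y' → (x' = x ↔ y' = y) := by decide
  constructor
  · -- Success → ¬Fail
    intro hs hF
    obtain ⟨h1, h2, h3⟩ := hF
    set a' : (Fin n × Fin m) → ZMod 2 :=
      fun p => a p + (if p.2 = 0 then 1 else 0) with ha'def
    set b' : (Fin n × Fin m) → ZMod 2 :=
      fun p => b p + (if p.1 = 0 then 1 else 0) with hb'def
    have hsum1 : ∀ l : Fin n, ∑ j, a' (l, j) = (∑ j, a (l, j)) + 1 := by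
      intro l
      rw [ha'def]
      simp only
      rw [Finset.sum_add_distrib]
      congr 1
      simp
    have hax : a' ∈ CXqpc n m := by
      intro l l'
      rw [hsum1, hsum1, ha l l']
    have hbz : b' ∈ CZqpc n m := by
      intro l j j'
      simp only [hb'def]
      rw [hb l j j']
    have hind : IndistQPC n m a b a' b' := by
      refine ⟨?_, ?_, ?_, ?_⟩
      · simp only [ha'def, hb'def, if_pos rfl]
        exact z1 _ _
      · intro h; exact absurd h (z2 _ _ h1)
      · intro j hj
        constructor
        · simp [ha'def, hj]
        · intro h; exact absurd h (by rw [h2 j hj]; decide)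
      · intro l j hl
        constructor
        · simp [hb'def, hl]
        · intro h; exact absurd h (by rw [h3 l hl j]; decide)
    have := (hs a' b' hax hbz hind).1
    rw [LXqpc, LXqpc] at this
    rw [hsum1 0] at this
    have zx : ∀ x : ZMod 2, x + 1 ≠ x := by decide
    exact zx _ this
  · -- ¬Fail → Success
    intro hnF a' b' ha' hb' hind
    obtain ⟨h00, h00', hX, hZ⟩ := hind
    suffices ha0 : a' (0, 0) = a (0, 0) by
      have hb0 : b' (0, 0) = b (0, 0) := (link _ _ _ _ h00).mp ha0
      constructor
      · rw [LXqpc, LXqpc, zmod2_sum_split (fun j => a' (0, j)) 0,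
          zmod2_sum_split (fun j => a (0, j)) 0, ha0]
        congr 1
        exact Finset.sum_congr rfl fun j _ => (hX j.1 j.2).1
      · rw [LZqpc, LZqpc, zmod2_sum_split (fun l => b' (l, 0)) 0,
          zmod2_sum_split (fun l => b (l, 0)) 0, hb0]
        congr 1
        exact Finset.sum_congr rfl fun l _ => (hZ l.1 0 l.2).1
    by_cases h1 : a (0, 0) = b (0, 0)
    · by_cases h2 : ∀ j : Fin m, j ≠ 0 → a (0, j) = 0
      · have h3 : ¬ ∀ l : Fin n, l ≠ 0 → ∀ j, b (l, j) = 0 := fun h => hnF ⟨h1, h2, h⟩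
        push_neg at h3
        obtain ⟨l, hl, j, hbl⟩ := h3
        have hb1 : ∀ j', b (l, j') = 1 := fun j' => z3 _ (by rw [hb l j' j]; exact hbl)
        have haeq : ∀ j', a' (l, j') = a (l, j') := fun j' => (hZ l j' hl).2 (hb1 j')
        have hsum : ∑ j', a' (0, j') = ∑ j', a (0, j') := by
          calc ∑ j', a' (0, j') = ∑ j', a' (l, j') := ha' 0 l
            _ = ∑ j', a (l, j') := Finset.sum_congr rfl fun j' _ => haeq j'
            _ = ∑ j', a (0, j') := (ha 0 l).symm
        rw [zmod2_sum_split (fun j' => a' (0, j')) 0,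
          zmod2_sum_split (fun j' => a (0, j')) 0] at hsum
        have hrest : ∑ j' : {j' : Fin m // j' ≠ 0}, a' (0, j'.1)
            = ∑ j' : {j' : Fin m // j' ≠ 0}, a (0, j'.1) :=
          Finset.sum_congr rfl fun j' _ => (hX j'.1 j'.2).1
        rw [hrest] at hsum
        exact add_right_cancel hsum
      · push_neg at h2
        obtain ⟨j, hj, haj⟩ := h2
        have hbj : b' (0, j) = b (0, j) := (hX j hj).2 (z3 _ haj)
        have hb0 : b' (0, 0) = b (0, 0) := by
          rw [hb' 0 0 j, hbj, hb 0 j 0]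
        exact (link _ _ _ _ h00).mpr hb0
    · exact (h00' (z4 _ _ h1)).1

/-- reconstruction of a CX codeword from parity and free coordinates -/
def reconX (n m : ℕ) [NeZero m] (s : ZMod 2)
    (f : Fin n → {j : Fin m // j ≠ 0} → ZMod 2) : (Fin n × Fin m) → ZMod 2 :=
  fun p => if h : p.2 = 0 then s + ∑ j, f p.1 j else f p.1 ⟨p.2, h⟩

lemma zadd2 : ∀ x y : ZMod 2, x + y + y = x := by decide

lemma reconX_sum (n m : ℕ) [NeZero m] (s : ZMod 2)
    (f : Fin n → {j : Fin m // j ≠ 0} → ZMod 2) (l : Fin n) :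
    ∑ j, reconX n m s f (l, j) = s := by
  rw [zmod2_sum_split (fun j => reconX n m s f (l, j)) 0]
  simp only [reconX, dif_pos rfl]
  have : ∀ j : {j : Fin m // j ≠ 0},
      (if h : j.1 = 0 then s + ∑ j', f l j' else f l ⟨j.1, h⟩) = f l j := by
    intro j; rw [dif_neg j.2]
  rw [Finset.sum_congr rfl fun j _ => this j]
  exact zadd2 _ _

lemma reconX_mem (n m : ℕ) [NeZero m] (s : ZMod 2)
    (f : Fin n → {j : Fin m // j ≠ 0} → ZMod 2) : reconX n m s f ∈ CXqpc n m := by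
  intro l l'; rw [reconX_sum, reconX_sum]

noncomputable def eCX (n m : ℕ) [NeZero n] [NeZero m] :
    ↥(CXqpc n m) ≃ ZMod 2 × (Fin n → {j : Fin m // j ≠ 0} → ZMod 2) where
  toFun a := (∑ j, a.1 (0, j), fun l j => a.1 (l, j.1))
  invFun sf := ⟨reconX n m sf.1 sf.2, reconX_mem n m sf.1 sf.2⟩
  left_inv a := by
    apply Subtype.ext
    funext p
    obtain ⟨l, j⟩ := p
    by_cases h : j = 0
    · subst h
      simp only [reconX]
      rw [dif_pos trivial]
      have hsl : ∑ j', a.1 (l, j') = ∑ j', a.1 (0, j') := a.2 l 0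
      rw [zmod2_sum_split (fun j' => a.1 (l, j')) 0] at hsl
      rw [← hsl]
      exact zadd2 _ _
    · simp only [reconX]
      rw [dif_neg h]
  right_inv sf := by
    obtain ⟨s, f⟩ := sf
    refine Prod.ext ?_ ?_
    · exact reconX_sum n m s f 0
    · funext l j
      simp only [reconX]
      rw [dif_neg j.2]

def eCZ (n m : ℕ) [NeZero m] : ↥(CZqpc n m) ≃ (Fin n → ZMod 2) where
  toFun b := fun l => b.1 (l, 0)
  invFun β := ⟨fun p => β p.1, fun l j j' => rfl⟩
  left_inv b := by
    apply Subtype.ext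
    funext p
    exact b.2 p.1 0 p.2
  right_inv β := rfl

lemma card_CX (n m : ℕ) [NeZero n] [NeZero m] :
    Nat.card ↥(CXqpc n m) = 2 ^ (n * (m - 1) + 1) := by
  rw [Nat.card_congr (eCX n m)]
  have h1 : Fintype.card {j : Fin m // j ≠ 0} = m - 1 := by
    simp [Fintype.card_subtype_compl]
  simp [Nat.card_eq_fintype_card, Fintype.card_fun, h1, pow_succ, ← pow_mul, mul_comm]

lemma card_CZ (n m : ℕ) [NeZero m] :
    Nat.card ↥(CZqpc n m) = 2 ^ n := by
  rw [Nat.card_congr (eCZ n m)]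
  simp [Nat.card_eq_fintype_card]


def FailSet (n m : ℕ) [NeZero n] [NeZero m] :
    Set (((Fin n × Fin m) → ZMod 2) × ((Fin n × Fin m) → ZMod 2)) :=
  {p | p.1 ∈ CXqpc n m ∧ p.2 ∈ CZqpc n m ∧ Fqpc n m p.1 p.2}

def failA (n m : ℕ) [NeZero n] [NeZero m] (s : ZMod 2)
    (f : {l : Fin n // l ≠ 0} → {j : Fin m // j ≠ 0} → ZMod 2) :
    (Fin n × Fin m) → ZMod 2 :=
  reconX n m s (fun l => if hl : l = 0 then 0 else f ⟨l, hl⟩)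

def failB (n m : ℕ) [NeZero n] (s : ZMod 2) : (Fin n × Fin m) → ZMod 2 :=
  fun p => if p.1 = 0 then s else 0

lemma failA_0j (n m : ℕ) [NeZero n] [NeZero m] (s f) (j : Fin m) (hj : j ≠ 0) :
    failA n m s f (0, j) = 0 := by
  simp only [failA, reconX]
  rw [dif_neg hj]
  simp

lemma failA_00 (n m : ℕ) [NeZero n] [NeZero m] (s f) :
    failA n m s f (0, 0) = s := by
  have h := reconX_sum n m s (fun l => if hl : l = 0 then 0 else f ⟨l, hl⟩) 0
  rw [zmod2_sum_split (fun j => reconX n m s _ (0, j)) 0] at h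
  have h2 : ∑ j : {j : Fin m // j ≠ 0},
      reconX n m s (fun l => if hl : l = 0 then 0 else f ⟨l, hl⟩) (0, j.1) = 0 :=
    Finset.sum_eq_zero fun j _ => failA_0j n m s f j.1 j.2
  rw [h2, add_zero] at h
  exact h

lemma failA_lj (n m : ℕ) [NeZero n] [NeZero m] (s f) (l : Fin n) (j : Fin m)
    (hl : l ≠ 0) (hj : j ≠ 0) : failA n m s f (l, j) = f ⟨l, hl⟩ ⟨j, hj⟩ := by
  simp only [failA, reconX]
  rw [dif_neg hj, dif_neg hl]

lemma failA_mem (n m : ℕ) [NeZero n] [NeZero m] (s f) :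
    failA n m s f ∈ CXqpc n m := reconX_mem n m _ _

noncomputable def eFail (n m : ℕ) [NeZero n] [NeZero m] :
    ↥(FailSet n m) ≃ ZMod 2 × ({l : Fin n // l ≠ 0} → {j : Fin m // j ≠ 0} → ZMod 2) where
  toFun p := (p.1.1 (0, 0), fun l j => p.1.1 (l.1, j.1))
  invFun sf :=
    ⟨(failA n m sf.1 sf.2, failB n m sf.1),
     by
      refine ⟨failA_mem n m _ _, ?_, ?_, ?_, ?_⟩
      · intro l j j'
        show failB n m sf.1 (l, j) = failB n m sf.1 (l, j')
        rfl
      · show failA n m sf.1 sf.2 (0, 0) = failB n m sf.1 (0, 0)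
        rw [failA_00]
        simp [failB]
      · intro j hj
        exact failA_0j n m _ _ j hj
      · intro l hl j
        show failB n m sf.1 (l, j) = 0
        simp only [failB]
        rw [if_neg hl]⟩
  left_inv p := by
    obtain ⟨⟨a, b⟩, hax, hbz, hF1, hF2, hF3⟩ := p
    simp only at hax hbz hF1 hF2 hF3
    apply Subtype.ext
    simp only
    have hs : ∑ j, a (0, j) = a (0, 0) := by
      rw [zmod2_sum_split (fun j => a (0, j)) 0]
      have h2 : ∑ j : {j : Fin m // j ≠ 0}, a (0, j.1) = 0 :=
        Finset.sum_eq_zero fun j _ => hF2 j.1 j.2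
      rw [h2, add_zero]
    refine Prod.ext ?_ ?_
    · show failA n m (a (0, 0)) (fun l j => a (l.1, j.1)) = a
      funext q
      obtain ⟨l, j⟩ := q
      by_cases hl : l = 0
      · subst hl
        by_cases hj : j = 0
        · subst hj; rw [failA_00]
        · rw [failA_0j n m _ _ j hj, hF2 j hj]
    -- l ≠ 0 case
      · by_cases hj : j = 0
        · subst hj
          -- failA (l,0) = s + ∑_{j≠0} a (l,j) = a (l, 0)
          simp only [failA, reconX]
          rw [dif_pos trivial]
          have hsum : ∑ j' : {j' : Fin m // j' ≠ 0},
              (if hl' : l = 0 then (0 : {j : Fin m // j ≠ 0} → ZMod 2)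
                else fun j => a (l, j.1)) j' = ∑ j' : {j' : Fin m // j' ≠ 0}, a (l, j'.1) := by
            refine Finset.sum_congr rfl fun j' _ => ?_
            rw [dif_neg hl]
          rw [hsum]
          have hbl : ∑ j', a (l, j') = a (0, 0) := by rw [hax l 0, hs]
          rw [zmod2_sum_split (fun j' => a (l, j')) 0] at hbl
          have : a (0, 0) + ∑ j' : {j' : Fin m // j' ≠ 0}, a (l, j'.1) = a (l, 0) := by
            rw [← hbl]; exact zadd2 _ _
          exact this
        · rw [failA_lj n m _ _ l j hl hj]
    · show failB n m (a (0, 0)) = b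
      funext q
      obtain ⟨l, j⟩ := q
      simp only [failB]
      by_cases hl : l = 0
      · subst hl
        rw [if_pos rfl, hF1, hbz 0 0 j]
      · rw [if_neg hl, (hF3 l hl j).symm]
  right_inv sf := by
    obtain ⟨s, f⟩ := sf
    refine Prod.ext ?_ ?_
    · show failA n m s f (0, 0) = s
      exact failA_00 n m s f
    · funext l j
      show failA n m s f (l.1, j.1) = f l j
      rw [failA_lj n m s f l.1 j.1 l.2 j.2]

lemma card_Fail (n m : ℕ) [NeZero n] [NeZero m] :
    Nat.card ↥(FailSet n m) = 2 ^ ((n - 1) * (m - 1) + 1) := by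
  rw [Nat.card_congr (eFail n m)]
  have h1 : Fintype.card {j : Fin m // j ≠ 0} = m - 1 := by
    simp [Fintype.card_subtype_compl]
  have h2 : Fintype.card {l : Fin n // l ≠ 0} = n - 1 := by
    simp [Fintype.card_subtype_compl]
  simp [Nat.card_eq_fintype_card, Fintype.card_fun, h1, h2, pow_succ, ← pow_mul, mul_comm]

/-- Theorem 6: the loss-free logical Bell-measurement efficiency of QPC(n,m) with the
mixed static linear-optics formation is exactly 1 − 2^{−(n+m−1)}. -/
theorem qpc_mixed_formation_efficiency (n m : ℕ) [NeZero n] [NeZero m]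
    (hn : 2 ≤ n) (hm : 2 ≤ m) :
    2 ^ (n + m - 1) *
      Nat.card {p : ((Fin n × Fin m) → ZMod 2) × ((Fin n × Fin m) → ZMod 2) |
        p.1 ∈ CXqpc n m ∧ p.2 ∈ CZqpc n m ∧ SuccessQPC n m p.1 p.2}
      = (2 ^ (n + m - 1) - 1) * 2 ^ (n * m + 1) := by
  have hset : {p : ((Fin n × Fin m) → ZMod 2) × ((Fin n × Fin m) → ZMod 2) |
        p.1 ∈ CXqpc n m ∧ p.2 ∈ CZqpc n m ∧ SuccessQPC n m p.1 p.2}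
      = (CXqpc n m ×ˢ CZqpc n m) \ FailSet n m := by
    ext p
    simp only [Set.mem_setOf_eq, Set.mem_diff, Set.mem_prod, FailSet]
    constructor
    · rintro ⟨h1, h2, h3⟩
      exact ⟨⟨h1, h2⟩, fun hf => (success_iff n m _ _ h1 h2).mp h3 hf.2.2⟩
    · rintro ⟨⟨h1, h2⟩, hnf⟩
      exact ⟨h1, h2, (success_iff n m _ _ h1 h2).mpr fun hf => hnf ⟨h1, h2, hf⟩⟩
  have hsub : FailSet n m ⊆ CXqpc n m ×ˢ CZqpc n m := fun p hp => ⟨hp.1, hp.2.1⟩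
  have hAll : Nat.card ↥(CXqpc n m ×ˢ CZqpc n m) = 2 ^ (n * m + 1) := by
    rw [Nat.card_congr (Equiv.Set.prod _ _), Nat.card_prod, card_CX, card_CZ, ← pow_add]
    congr 1
    have h1 : n * (m - 1) = n * m - n := by rw [Nat.mul_sub, mul_one]
    have h2 : n ≤ n * m := Nat.le_mul_of_pos_right n (by omega)
    omega
  have hFail := card_Fail n m
  rw [hset, Nat.card_coe_set_eq, Set.ncard_diff hsub, ← Nat.card_coe_set_eq,
    ← Nat.card_coe_set_eq, hAll, hFail]
  obtain ⟨A, rfl⟩ : ∃ A, n = A + 2 := ⟨n - 2, by omega⟩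
  obtain ⟨B, rfl⟩ : ∃ B, m = B + 2 := ⟨m - 2, by omega⟩
  have he : (A + 2) + (B + 2) - 1 = A + B + 3 := by omega
  have e1 : (A + 2) - 1 = A + 1 := by omega
  have e2 : (B + 2) - 1 = B + 1 := by omega
  have hk : ((A + 2) - 1) * ((B + 2) - 1) + 1 = (A + 1) * (B + 1) + 1 := by rw [e1, e2]
  have hN : (A + 2) * (B + 2) + 1 = (A + B + 3) + ((A + 1) * (B + 1) + 1) := by ring
  rw [he, hk, hN]
  simp only [Nat.mul_sub, Nat.sub_mul, ← pow_add, one_mul]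
end

section
/- For every m ≥ 1: (a) a board f : Fin m × Fin 2 → Bool is crossable if and only if every row contains a true cell, i.e. ∀ r : Fin m, f (r,0) = true ∨ f (r,1) = true; (b) the number of crossable boards f : Fin m × Fin 2 → Bool equals 3^m. -/
/-- A board `f` on `m` rows and `w` columns is crossable if there is a path of true
cells from row 0 to row m−1 whose consecutive cells change row and column by at most 1
in absolute value (diagonal moves allowed). -/
def Crossable (m w : ℕ) (f : Fin m × Fin w → Bool) : Prop :=
  ∃ (k : ℕ) (p : Fin (k + 1) → Fin m × Fin w),
    (∀ i, f (p i) = true) ∧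
    ((p 0).1 : ℕ) = 0 ∧
    ((p (Fin.last k)).1 : ℕ) = m - 1 ∧
    ∀ i : Fin k,
      |((p i.succ).1 : ℤ) - ((p i.castSucc).1 : ℤ)| ≤ 1 ∧
      |((p i.succ).2 : ℤ) - ((p i.castSucc).2 : ℤ)| ≤ 1

/-- Discrete intermediate value: a nat sequence starting at 0 with upward steps ≤ 1
attains every value up to `G k`. -/
lemma discrete_ivt (G : ℕ → ℕ) (h0 : G 0 = 0)
    (hstep : ∀ n, G (n + 1) ≤ G n + 1) (k r : ℕ) (hr : r ≤ G k) :
    ∃ n ≤ k, G n = r := by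
  induction k with
  | zero => exact ⟨0, le_refl 0, by omega⟩
  | succ k ih =>
    by_cases h : r ≤ G k
    · obtain ⟨n, hn, hGn⟩ := ih h
      exact ⟨n, by omega, hGn⟩
    · have := hstep k
      exact ⟨k + 1, le_refl _, by omega⟩

/-- Calculation 2 (combinatorial core): a width-2 board is crossable iff every row
contains a true cell, and the number of crossable width-2 boards with m rows is 3^m. -/
theorem crossable_width_two (m : ℕ) (hm : 1 ≤ m) :
    (∀ f : Fin m × Fin 2 → Bool,
      Crossable m 2 f ↔ ∀ r : Fin m, f (r, 0) = true ∨ f (r, 1) = true) ∧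
    Nat.card {f : Fin m × Fin 2 → Bool | Crossable m 2 f} = 3 ^ m := by
  have hiff : ∀ f : Fin m × Fin 2 → Bool,
      Crossable m 2 f ↔ ∀ r : Fin m, f (r, 0) = true ∨ f (r, 1) = true := by
    intro f
    constructor
    · rintro ⟨k, p, hf, h0, hlast, hstep⟩ r
      set G : ℕ → ℕ := fun n => ((p ⟨min n k, by omega⟩).1 : ℕ) with hG
      have hG0 : G 0 = 0 := by
        simpa [hG, Nat.min_eq_left (Nat.zero_le k)] using h0
      have hGstep : ∀ n, G (n + 1) ≤ G n + 1 := by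
        intro n
        by_cases hn : n < k
        · have h1 : min n k = n := by omega
          have h2 : min (n + 1) k = n + 1 := by omega
          have := (hstep ⟨n, hn⟩).1
          have hs : (⟨n, hn⟩ : Fin k).succ = ⟨n + 1, by omega⟩ := rfl
          have hc : (⟨n, hn⟩ : Fin k).castSucc = ⟨n, by omega⟩ := rfl
          rw [hs, hc, abs_le] at this
          simp only [hG, h1, h2]
          omega
        · have h1 : min n k = k := by omega
          have h2 : min (n + 1) k = k := by omega
          simp [hG, h1, h2]
      have hrk : (r : ℕ) ≤ G k := by
        have : G k = m - 1 := by
          have : min k k = k := min_self k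
          simpa [hG, this, Fin.last] using hlast
        have := r.isLt
        omega
      obtain ⟨n, hn, hGn⟩ := discrete_ivt G hG0 hGstep k r hrk
      set q := p ⟨min n k, by omega⟩ with hq
      have hq1 : q.1 = r := by
        apply Fin.ext
        simpa [hG, hq] using hGn
      have hqt : f q = true := hf _
      have h2 : q.2 = 0 ∨ q.2 = 1 := by
        have hlt := q.2.isLt
        have : (q.2 : ℕ) = 0 ∨ (q.2 : ℕ) = 1 := by omega
        rcases this with h | h
        · left; exact Fin.ext h
        · right; exact Fin.ext h
      rcases h2 with h2 | h2
      · left; rw [← hq1, ← h2]; simpa using hqt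
      · right; rw [← hq1, ← h2]; simpa using hqt
    · intro h
      have h' : ∀ r : Fin m, ∃ c : Fin 2, f (r, c) = true := fun r =>
        (h r).elim (fun hx => ⟨0, hx⟩) (fun hx => ⟨1, hx⟩)
      choose c hc using h'
      refine ⟨m - 1, fun i => (⟨i, by omega⟩, c ⟨i, by omega⟩), fun i => hc _, ?_, ?_, ?_⟩
      · simp
      · simp [Fin.last]
      · intro i
        constructor
        · have hs : (i.succ : ℕ) = (i : ℕ) + 1 := rfl
          have hcs : (i.castSucc : ℕ) = (i : ℕ) := rfl
          simp only [hs, hcs]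
          rw [abs_le]
          constructor <;> push_cast <;> omega
        · have h1 := (c ⟨(i.succ : ℕ), by omega⟩).isLt
          have h2 := (c ⟨(i.castSucc : ℕ), by omega⟩).isLt
          rw [abs_le]
          constructor <;> push_cast <;> omega
  refine ⟨hiff, ?_⟩
  have hset : {f : Fin m × Fin 2 → Bool | Crossable m 2 f} =
      {f : Fin m × Fin 2 → Bool | ∀ r : Fin m, f (r, 0) = true ∨ f (r, 1) = true} := by
    ext f; exact hiff f
  rw [hset]
  have e1 : {f : Fin m × Fin 2 → Bool // ∀ r : Fin m, f (r, 0) = true ∨ f (r, 1) = true} ≃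
      ∀ _ : Fin m, {v : Fin 2 → Bool // v 0 = true ∨ v 1 = true} :=
    ((Equiv.curry (Fin m) (Fin 2) Bool).subtypeEquiv
      (q := fun g => ∀ r : Fin m, g r 0 = true ∨ g r 1 = true) (fun f => Iff.rfl)).trans
      (Equiv.subtypePiEquivPi (p := fun (_ : Fin m) (v : Fin 2 → Bool) =>
        v 0 = true ∨ v 1 = true))
  have : Nat.card {f : Fin m × Fin 2 → Bool | ∀ r : Fin m, f (r, 0) = true ∨ f (r, 1) = true}
      = Nat.card (∀ _ : Fin m, {v : Fin 2 → Bool // v 0 = true ∨ v 1 = true}) :=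
    Nat.card_congr e1
  rw [this, Nat.card_pi]
  have h3 : Nat.card {v : Fin 2 → Bool // v 0 = true ∨ v 1 = true} = 3 := by
    rw [Nat.card_eq_fintype_card]; decide
  rw [Nat.card_eq_fintype_card] at h3
  simp [h3]
end

section
/- For every m ≥ 1, let c_m be the number of crossable boards f : Fin m × Fin 3 → Bool. Then, as an identity of real numbers, 41 · 2^{m+1} · c_m = (41 − 7·√41)·(7 − √41)^m + (41 + 7·√41)·(7 + √41)^m. -/
open Finset Relation

theorem Relation.reflTransGen_iff_exists_fin_path {α : Type*} {r : α → α → Prop} {a b : α} :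
    ReflTransGen r a b ↔ ∃ (k : ℕ) (q : Fin (k + 1) → α),
      q 0 = a ∧ q (Fin.last k) = b ∧ ∀ i : Fin k, r (q i.castSucc) (q i.succ) := by
  constructor
  · intro h
    induction h using ReflTransGen.head_induction_on with
    | refl => exact ⟨0, fun _ => b, rfl, rfl, Fin.elim0⟩
    | head hac _ ih =>
      obtain ⟨k, q, h0, hk, hq⟩ := ih
      refine ⟨k + 1, Fin.cons _ q, rfl, by simpa using hk, Fin.cases ?_ fun i => ?_⟩
      · simpa [h0] using hac
      · simpa [← Fin.succ_castSucc] using hq i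
  · rintro ⟨k, q, rfl, rfl, hq⟩
    have hpath (t : Fin (k + 1)) : ReflTransGen r (q 0) (q t) := by
      induction t using Fin.induction with
      | zero => rfl
      | succ i ih => exact ih.tail (hq i)
    exact hpath _

section Automaton

variable {σ α : Type*} (δ : σ → α → σ) (q : σ)

def runAutomaton {n : ℕ} (w : Fin n → α) : σ :=
  Fin.foldl n (fun s i => δ s (w i)) q

theorem runAutomaton_succ {n : ℕ} (w : Fin (n + 1) → α) :
    runAutomaton δ q w = δ (runAutomaton δ q (Fin.init w)) (w (Fin.last n)) :=
  Fin.foldl_succ_last ..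

theorem card_runAutomaton_succ [Fintype σ] [DecidableEq σ] [Fintype α] (n : ℕ) (s : σ) :
    #{w : Fin (n + 1) → α | runAutomaton δ q w = s} =
      ∑ s₀, #{w : Fin n → α | runAutomaton δ q w = s₀} * #{a | δ s₀ a = s} := by
  calc #{w : Fin (n + 1) → α | runAutomaton δ q w = s}
      = #{v : α × (Fin n → α) | δ (runAutomaton δ q v.2) v.1 = s} :=
        card_equiv (Fin.snocEquiv _).symm fun w => by simp [runAutomaton_succ]
    _ = ∑ s₀, #{v ∈ {v : α × (Fin n → α) | δ (runAutomaton δ q v.2) v.1 = s} |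
          runAutomaton δ q v.2 = s₀} := by
        rw [sum_card_fiberwise_eq_card_filter]; simp
    _ = _ := sum_congr rfl fun s₀ _ => by
        rw [mul_comm, ← card_product, ← filter_product]
        congr 1; ext; simp only [mem_filter, mem_univ, true_and]; grind

end Automaton

namespace Crossable

def Near (a b : ℕ) : Prop := |(b : ℤ) - a| ≤ 1

instance : DecidableRel Near := fun a b => inferInstanceAs (Decidable (|(b : ℤ) - a| ≤ 1))

theorem near_iff {a b : ℕ} : Near a b ↔ a ≤ b + 1 ∧ b ≤ a + 1 := by
  rw [Near, abs_le]; omega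

theorem near_refl (a : ℕ) : Near a a := by simp [Near]

theorem near_succ (a : ℕ) : Near a (a + 1) := by simp [Near]

def boardRows {m w : ℕ} (f : Fin m × Fin w → Bool) (i : ℕ) (j : Fin w) : Bool :=
  if h : i < m then f (⟨i, h⟩, j) else false

theorem lt_of_boardRows_eq_true {m w : ℕ} {f : Fin m × Fin w → Bool} {i : ℕ} {j : Fin w}
    (h : boardRows f i j = true) : i < m := by
  by_contra hi
  simp [boardRows, hi] at h

def KingStep {w : ℕ} (g : ℕ → Fin w → Bool) (x y : ℕ × Fin w) : Prop :=
  Near x.1 y.1 ∧ Near x.2 y.2 ∧ g y.1 y.2 = true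

theorem iff_reflTransGen {m w : ℕ} (f : Fin m × Fin w → Bool) :
    Crossable m w f ↔ ∃ j₀ j : Fin w, boardRows f 0 j₀ = true ∧
      ReflTransGen (KingStep (boardRows f)) (0, j₀) (m - 1, j) := by
  have hrows (x : Fin m × Fin w) : boardRows f x.1 x.2 = f x := by simp [boardRows]
  constructor
  · rintro ⟨k, p, hf, h0, hlast, hstep⟩
    refine ⟨(p 0).2, (p (Fin.last k)).2, by simpa [← h0, hrows] using hf 0, ?_⟩
    refine reflTransGen_iff_exists_fin_path.2
      ⟨k, fun t => ((p t).1, (p t).2), by simp [h0], by simp [hlast], fun i => ?_⟩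
    exact ⟨(hstep i).1, (hstep i).2, by simp only [hrows, hf]⟩
  · rintro ⟨j₀, j, h0, h⟩
    obtain ⟨k, q, hq0, hqk, hq⟩ := reflTransGen_iff_exists_fin_path.1 h
    have htrue : ∀ t, boardRows f (q t).1 (q t).2 = true :=
      Fin.cases (by rw [hq0]; exact h0) fun i => (hq i).2.2
    have hlt t := lt_of_boardRows_eq_true (htrue t)
    refine ⟨k, fun t => (⟨(q t).1, hlt t⟩, (q t).2), fun t => ?_, by simp [hq0], by simp [hqk],
      fun i => ⟨(hq i).1, (hq i).2.1⟩⟩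
    simpa [boardRows, hlt t] using htrue t

abbrev Row := Fin 3 → Bool

theorem one_near (c : Fin 3) : Near (1 : Fin 3) c := by revert c; decide

theorem eq_one_of_near_of_not_near {a b c : Fin 3} :
    Near a b → Near b c → ¬ Near a c → b = 1 := by
  revert a b c; decide

def spread (S p : Row) : Row := fun j => p j && decide (∃ c, S c = true ∧ Near c j)

theorem spread_eq_true {S p : Row} {j : Fin 3} :
    spread S p j = true ↔ p j = true ∧ ∃ c, S c = true ∧ Near c j := by
  simp [spread]

/-- Spreading a second time closes the reached cells under moves inside the row; this is what
makes the counts of `card_runAutomaton_reachStep` uniform. -/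
def reachStep (S p : Row) : Row := spread (spread S p) p

theorem reachStep_top (p : Row) : reachStep ⊤ p = p := by revert p; decide

theorem reachStep_bot (p : Row) : reachStep ⊥ p = ⊥ := by revert p; decide

theorem reachStep_one {S p : Row} :
    p 1 = true → reachStep S p ≠ ⊥ → reachStep S p 1 = true := by
  revert S p; decide

theorem reachStep_eq_true_of_near {S p : Row} {c j : Fin 3} (hc : S c = true) (hj : p j = true)
    (h : Near c j) : reachStep S p j = true :=
  spread_eq_true.2 ⟨hj, j, spread_eq_true.2 ⟨hj, c, hc, h⟩, near_refl _⟩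

theorem exists_of_reachStep_eq_true {S p : Row} {j : Fin 3} (h : reachStep S p j = true) :
    ∃ c e : Fin 3, S c = true ∧ Near c e ∧ p e = true ∧ Near e j ∧ p j = true := by
  obtain ⟨hj, e, he, hej⟩ := spread_eq_true.1 h
  obtain ⟨he', c, hc, hce⟩ := spread_eq_true.1 he
  exact ⟨c, e, hc, hce, he', hej, hj⟩

def reach (g : ℕ → Row) (i : ℕ) : Row := runAutomaton reachStep ⊤ fun k : Fin (i + 1) => g k

def UpStep (g : ℕ → Row) (x y : ℕ × Fin 3) : Prop := KingStep g x y ∧ y.1 ≤ x.1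

def Linked (g : ℕ → Row) (x : ℕ × Fin 3) : Prop :=
  ∃ y : ℕ × Fin 3, reach g y.1 y.2 = true ∧ ReflTransGen (UpStep g) y x

section Reach

variable {g : ℕ → Row}

theorem reach_zero : reach g 0 = g 0 := reachStep_top _

theorem reach_succ (i : ℕ) : reach g (i + 1) = reachStep (reach g i) (g (i + 1)) := by
  rw [reach, runAutomaton_succ]
  rfl

theorem reach_eq_bot_of_le {i i' : ℕ} (hle : i ≤ i') (h : reach g i = ⊥) : reach g i' = ⊥ := by
  induction i', hle using Nat.le_induction with
  | base => exact h
  | succ i' _ ih => rw [reach_succ, ih, reachStep_bot]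

theorem reach_one {i : ℕ} (h1 : g i 1 = true) (h : reach g i ≠ ⊥) : reach g i 1 = true := by
  cases i with
  | zero => rwa [reach_zero]
  | succ i => rw [reach_succ] at h ⊢; exact reachStep_one h1 h

theorem exists_reflTransGen_of_reach {i : ℕ} {j : Fin 3} (h : reach g i j = true) :
    ∃ j₀, g 0 j₀ = true ∧ ReflTransGen (KingStep g) (0, j₀) (i, j) := by
  induction i generalizing j with
  | zero => exact ⟨j, by rwa [reach_zero] at h, .refl⟩
  | succ i ih =>
    rw [reach_succ] at h
    obtain ⟨c, e, hc, hce, he, hej, hj⟩ := exists_of_reachStep_eq_true h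
    obtain ⟨j₀, h₀, hpath⟩ := ih hc
    have hdown : KingStep g (i, c) (i + 1, e) := ⟨near_succ i, hce, he⟩
    have hacross : KingStep g (i + 1, e) (i + 1, j) := ⟨near_refl _, hej, hj⟩
    exact ⟨j₀, h₀, (hpath.tail hdown).tail hacross⟩

theorem reach_ne_bot_of_linked {x : ℕ × Fin 3} (hx : Linked g x) : reach g x.1 ≠ ⊥ := by
  obtain ⟨y, hy, hyx⟩ := hx
  have hle : x.1 ≤ y.1 := by
    induction hyx with
    | refl => exact le_rfl
    | tail _ hst ih => exact hst.2.trans ih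
  intro hbot
  simp [reach_eq_bot_of_le hle hbot] at hy

/-- A move down from `x` to `z` either can already be made from the cell preceding `x`, or it
passes from column `0` to column `2` (or back) around `x`, which then lies in the middle column;
`x` is linked, so its row is reached, and hence reached in the middle column. -/
theorem linked_of_kingStep_succ {x y : ℕ × Fin 3} (hy : reach g y.1 y.2 = true)
    (hyx : ReflTransGen (UpStep g) y x) {z : ℕ × Fin 3} (hxz : KingStep g x z)
    (hz : z.1 = x.1 + 1) : Linked g z := by
  induction hyx generalizing z with
  | refl =>
    refine ⟨z, ?_, .refl⟩
    rw [hz, reach_succ]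
    exact reachStep_eq_true_of_near hy (hz ▸ hxz.2.2) hxz.2.1
  | @tail x' x hyx' hx'x ih =>
    by_cases hnear : Near x'.2 z.2
    · obtain ⟨⟨hrow, -, -⟩, hle⟩ := hx'x
      rcases Nat.eq_or_lt_of_le hle with heq | hlt
      · exact ih ⟨by rw [← heq]; exact hxz.1, hnear, hxz.2.2⟩ (by rw [← heq]; exact hz)
      · have hx' : x'.1 = z.1 := by rw [near_iff] at hrow; omega
        exact ⟨y, hy, hyx'.tail ⟨⟨by rw [hx']; exact near_refl _, hnear, hxz.2.2⟩, hx'.ge⟩⟩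
    · have hmid : x.2 = 1 := eq_one_of_near_of_not_near hx'x.1.2.1 hxz.2.1 hnear
      have hreach : reach g x.1 1 = true :=
        reach_one (hmid ▸ hx'x.1.2.2) (reach_ne_bot_of_linked ⟨y, hy, hyx'.tail hx'x⟩)
      refine ⟨z, ?_, .refl⟩
      rw [hz, reach_succ]
      exact reachStep_eq_true_of_near hreach (hz ▸ hxz.2.2) (one_near _)

theorem linked_of_kingStep {x z : ℕ × Fin 3} (hx : Linked g x) (hxz : KingStep g x z) :
    Linked g z := by
  obtain ⟨y, hy, hyx⟩ := hx
  by_cases hz : z.1 ≤ x.1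
  · exact ⟨y, hy, hyx.tail ⟨hxz, hz⟩⟩
  · exact linked_of_kingStep_succ hy hyx hxz (by have := near_iff.1 hxz.1; omega)

theorem reach_ne_bot_of_reflTransGen {j₀ : Fin 3} {x : ℕ × Fin 3} (h₀ : g 0 j₀ = true)
    (h : ReflTransGen (KingStep g) (0, j₀) x) : reach g x.1 ≠ ⊥ := by
  refine reach_ne_bot_of_linked ?_
  induction h with
  | refl => exact ⟨(0, j₀), by rwa [reach_zero], .refl⟩
  | tail _ hst ih => exact linked_of_kingStep ih hst

end Reach

theorem three_iff_reach_ne_bot {n : ℕ} (f : Fin (n + 1) × Fin 3 → Bool) :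
    Crossable (n + 1) 3 f ↔ reach (boardRows f) n ≠ ⊥ := by
  rw [iff_reflTransGen, Nat.add_sub_cancel]
  constructor
  · rintro ⟨j₀, j, h₀, h⟩
    exact reach_ne_bot_of_reflTransGen h₀ h
  · intro h
    obtain ⟨j, hj⟩ : ∃ j, reach (boardRows f) n j = true := by
      by_contra! hne
      exact h (funext fun j => by simpa using hne j)
    obtain ⟨j₀, h₀, hpath⟩ := exists_reflTransGen_of_reach hj
    exact ⟨j₀, j, h₀, hpath⟩

theorem reach_boardRows {n : ℕ} (f : Fin (n + 1) × Fin 3 → Bool) :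
    reach (boardRows f) n = runAutomaton reachStep ⊤ (Function.curry f) := by
  unfold reach
  congr
  funext k j
  simp [boardRows, k.is_le]

/-- `{0, 2}`, the only nonempty row that is not connected. -/
def gap : Row := ![true, false, true]

def weight (c : ℕ × ℕ) (s : Row) : ℕ := if s = ⊥ then 0 else if s = gap then c.2 else c.1

theorem weight_eq (c : ℕ × ℕ) (s : Row) :
    weight c s = c.1 * weight (1, 0) s + c.2 * weight (0, 1) s := by
  unfold weight; split_ifs <;> simp

theorem sum_weight_mul_card_reachStep (c : ℕ × ℕ) {s : Row} (hs : s ≠ ⊥) :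
    ∑ s₀, weight c s₀ * #{p | reachStep s₀ p = s} = weight (6 * c.1 + c.2, 4 * c.1 + c.2) s := by
  have h₁ : ∀ s : Row, s ≠ ⊥ →
      ∑ s₀, weight (1, 0) s₀ * #{p | reachStep s₀ p = s} = weight (6, 4) s := by decide
  have h₂ : ∀ s : Row, s ≠ ⊥ →
      ∑ s₀, weight (0, 1) s₀ * #{p | reachStep s₀ p = s} = weight (1, 1) s := by decide
  calc ∑ s₀, weight c s₀ * #{p | reachStep s₀ p = s}
      = ∑ s₀, (c.1 * (weight (1, 0) s₀ * #{p | reachStep s₀ p = s}) +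
          c.2 * (weight (0, 1) s₀ * #{p | reachStep s₀ p = s})) :=
        sum_congr rfl fun s₀ _ => by rw [weight_eq c s₀]; ring
    _ = c.1 * weight (6, 4) s + c.2 * weight (1, 1) s := by
        rw [sum_add_distrib, ← mul_sum, ← mul_sum, h₁ s hs, h₂ s hs]
    _ = _ := by simp only [weight]; split_ifs <;> ring

def reachCounts : ℕ → ℕ × ℕ
  | 0 => (1, 1)
  | n + 1 => (6 * (reachCounts n).1 + (reachCounts n).2, 4 * (reachCounts n).1 + (reachCounts n).2)

theorem card_runAutomaton_reachStep (n : ℕ) {s : Row} (hs : s ≠ ⊥) :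
    #{w : Fin (n + 1) → Row | runAutomaton reachStep ⊤ w = s} = weight (reachCounts n) s := by
  induction n generalizing s with
  | zero =>
    have htop : ∀ s : Row, s ≠ ⊥ → #{p | reachStep ⊤ p = s} = 1 := by decide
    rw [card_runAutomaton_succ, Fintype.sum_eq_single ⊤ fun s₀ h => ?_]
    · simp [runAutomaton, htop s hs, weight, hs, reachCounts]
    · simp [runAutomaton, Ne.symm h]
  | succ n ih =>
    rw [card_runAutomaton_succ, reachCounts, ← sum_weight_mul_card_reachStep _ hs]
    refine sum_congr rfl fun s₀ _ => ?_
    by_cases h₀ : s₀ = ⊥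
    · simp [h₀, reachStep_bot, Ne.symm hs]
    · rw [ih h₀]

def crossCount (n : ℕ) : ℕ := 6 * (reachCounts n).1 + (reachCounts n).2

theorem card_three (n : ℕ) :
    Nat.card {f : Fin (n + 1) × Fin 3 → Bool | Crossable (n + 1) 3 f} = crossCount n := by
  calc Nat.card {f : Fin (n + 1) × Fin 3 → Bool | Crossable (n + 1) 3 f}
      = Nat.card {w : Fin (n + 1) → Row // runAutomaton reachStep ⊤ w ≠ ⊥} :=
        Nat.card_congr <| (Equiv.curry _ _ _).subtypeEquiv fun f => by
          rw [Set.mem_ofPred_eq, three_iff_reach_ne_bot, reach_boardRows]; rfl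
    _ = ∑ s with s ≠ ⊥, #{w : Fin (n + 1) → Row | runAutomaton reachStep ⊤ w = s} := by
        rw [sum_card_fiberwise_eq_card_filter, Nat.card_eq_fintype_card, Fintype.card_subtype]
        simp
    _ = ∑ s, weight (reachCounts n) s := by
        rw [sum_filter]
        refine sum_congr rfl fun s _ => ?_
        split_ifs with hs
        · exact card_runAutomaton_reachStep n hs
        · simp [weight, not_not.1 hs]
    _ = crossCount n := by
        simp_rw [weight_eq (reachCounts n), sum_add_distrib, ← mul_sum]
        rw [show ∑ s, weight (1, 0) s = 6 by decide, show ∑ s, weight (0, 1) s = 1 by decide]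
        simp only [crossCount]; ring

theorem crossCount_add_two (n : ℕ) :
    crossCount (n + 2) + 2 * crossCount n = 7 * crossCount (n + 1) := by
  simp only [crossCount, reachCounts]; ring

theorem crossCount_formula (n : ℕ) :
    41 * 2 ^ (n + 2) * (crossCount n : ℝ) =
      (41 - 7 * √41) * (7 - √41) ^ (n + 1) + (41 + 7 * √41) * (7 + √41) ^ (n + 1) := by
  have hs : √41 ^ 2 = 41 := Real.sq_sqrt (by norm_num)
  induction n using Nat.twoStepInduction with
  | zero => norm_num [crossCount, reachCounts]; linear_combination -14 * hs
  | one => norm_num [crossCount, reachCounts]; linear_combination -278 * hs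
  | more n ih₀ ih₁ =>
    have hrec : (crossCount (n + 2) : ℝ) + 2 * crossCount n = 7 * crossCount (n + 1) := by
      exact_mod_cast crossCount_add_two n
    linear_combination 4 * 41 * 2 ^ (n + 2) * hrec + 14 * ih₁ - 8 * ih₀ -
      ((41 - 7 * √41) * (7 - √41) ^ (n + 1) + (41 + 7 * √41) * (7 + √41) ^ (n + 1)) * hs

end Crossable

/-- Calculation 3 (combinatorial core): the number c_m of crossable width-3 boards with
m rows satisfies 41·2^{m+1}·c_m = (41 − 7√41)(7 − √41)^m + (41 + 7√41)(7 + √41)^m. -/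
theorem crossable_width_three (m : ℕ) (hm : 1 ≤ m) :
    41 * 2 ^ (m + 1) *
      (Nat.card {f : Fin m × Fin 3 → Bool | Crossable m 3 f} : ℝ) =
    (41 - 7 * Real.sqrt 41) * (7 - Real.sqrt 41) ^ m +
    (41 + 7 * Real.sqrt 41) * (7 + Real.sqrt 41) ^ m := by
  obtain ⟨n, rfl⟩ := Nat.exists_eq_add_of_le' hm
  rw [Crossable.card_three]
  exact Crossable.crossCount_formula n
end

section
/- Fix n ≥ 2 and consider the planar surface(n,n) lattice: qubits are the edges E := H ⊕ V with horizontal edges H = Fin n × Fin n (edge h(r,c) in row r, column c) and vertical edges V = Fin (n−1) × Fin (n−1) (edge v(r,k) between rows r and r+1 at gap k). The X-stabilizer generator at the vertex (r,k) ∈ Fin n × Fin (n−1) is the vector star(r,k) ∈ E → F₂ supported on h(r,k) and h(r,k+1), together with v(r−1,k) when r ≥ 1 and v(r,k) when r ≤ n−2. Let the diagonal be D := {h(r,r) | r ∈ Fin n} ∪ {v(r,r) | r ∈ Fin (n−1)} and let the diagonal vertices be Diag := {(r,r) | r ∈ Fin n, r ≤ n−2} ∪ {(r+1, r) | r ∈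 Fin (n−1)} (the 2(n−1) vertices whose star meets D). Then for every set S of vertices with S ∩ Diag ≠ ∅, the sum ∑_{v ∈ S} star(v) ∈ E → F₂ has at least one nonzero coordinate on D. -/
/-- Edges (qubits) of the planar surface(n,n) lattice: horizontal edges h(r,c) indexed by
Fin n × Fin n and vertical edges v(r,k) indexed by Fin (n−1) × Fin (n−1). -/
abbrev SurfaceEdge (n : ℕ) := (Fin n × Fin n) ⊕ (Fin (n - 1) × Fin (n - 1))

/-- The X-stabilizer generator at the vertex (r,k): supported on the horizontal edges
h(r,k) and h(r,k+1), together with v(r−1,k) when r ≥ 1 and v(r,k) when r ≤ n−2. -/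
def starOp (n : ℕ) (v : Fin n × Fin (n - 1)) : SurfaceEdge n → ZMod 2 :=
  fun e =>
    match e with
    | Sum.inl (r, c) =>
        if r = v.1 ∧ ((c : ℕ) = (v.2 : ℕ) ∨ (c : ℕ) = (v.2 : ℕ) + 1) then 1 else 0
    | Sum.inr (r', k) =>
        if (k : ℕ) = (v.2 : ℕ) ∧ ((r' : ℕ) + 1 = (v.1 : ℕ) ∨ (r' : ℕ) = (v.1 : ℕ))
        then 1 else 0

/-- The diagonal of the lattice: the edges h(r,r) and v(r,r). -/
def onDiagonal (n : ℕ) : SurfaceEdge n → Prop :=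
  fun e =>
    match e with
    | Sum.inl (r, c) => (r : ℕ) = (c : ℕ)
    | Sum.inr (r, k) => (r : ℕ) = (k : ℕ)

/-- The 2(n−1) diagonal vertices (r,r) with r ≤ n−2 and (r+1,r): the vertices whose star
meets the diagonal. -/
def DiagVertex (n : ℕ) (v : Fin n × Fin (n - 1)) : Prop :=
  (v.1 : ℕ) = (v.2 : ℕ) ∨ (v.1 : ℕ) = (v.2 : ℕ) + 1

/-- Key lemma of Calculation 4 ('pushing to the boundary'): any sum of X-stabilizer
generators of the planar surface(n,n) code that involves at least one diagonal vertex
retains support on the diagonal. -/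
theorem surface_star_sum_meets_diagonal (n : ℕ) (hn : 2 ≤ n)
    (S : Finset (Fin n × Fin (n - 1))) (hS : ∃ v ∈ S, DiagVertex n v) :
    ∃ e : SurfaceEdge n, onDiagonal n e ∧ (∑ v ∈ S, starOp n v) e ≠ 0 := by
  classical
  obtain ⟨v0, hv0, hd0⟩ := hS
  have hTne : (S.filter (fun v => DiagVertex n v)).Nonempty :=
    ⟨v0, Finset.mem_filter.mpr ⟨hv0, hd0⟩⟩
  obtain ⟨v, hvT, hmin⟩ :=
    Finset.exists_min_image _ (fun w => (w.1 : ℕ) + (w.2 : ℕ)) hTne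
  obtain ⟨hvS, hvD⟩ := Finset.mem_filter.mp hvT
  have hmin' : ∀ w ∈ S, DiagVertex n w → (v.1 : ℕ) + v.2 ≤ (w.1 : ℕ) + w.2 := by
    intro w hw hd; exact hmin w (Finset.mem_filter.mpr ⟨hw, hd⟩)
  rcases hvD with h1 | h2
  · refine ⟨Sum.inl (v.1, v.1), rfl, ?_⟩
    rw [Finset.sum_apply, Finset.sum_eq_single v]
    · simp only [starOp]
      rw [if_pos ⟨trivial, Or.inl h1⟩]
      exact one_ne_zero
    · intro w hw hne
      simp only [starOp]
      rw [if_neg]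
      rintro ⟨he1, he2 | he3⟩
      · have hv1 : (v.1 : ℕ) = (w.1 : ℕ) := congrArg Fin.val he1
        exact hne (Prod.ext (Fin.val_injective (by omega))
          (Fin.val_injective (by omega)))
      · have hv1 : (v.1 : ℕ) = (w.1 : ℕ) := congrArg Fin.val he1
        have hdw : DiagVertex n w := Or.inr (by omega)
        have := hmin' w hw hdw
        omega
    · intro h; exact absurd hvS h
  · refine ⟨Sum.inr (v.2, v.2), rfl, ?_⟩
    rw [Finset.sum_apply, Finset.sum_eq_single v]
    · simp only [starOp]
      rw [if_pos ⟨trivial, Or.inl h2.symm⟩]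
      exact one_ne_zero
    · intro w hw hne
      simp only [starOp]
      rw [if_neg]
      rintro ⟨he1, he2 | he3⟩
      · exact hne (Prod.ext (Fin.val_injective (by omega))
          (Fin.val_injective (by omega)))
      · have hdw : DiagVertex n w := Or.inl (by omega)
        have := hmin' w hw hdw
        omega
    · intro h; exact absurd hvS h
end

section
/- Let C_X, C_Z ⊆ F₂^N be subspaces with C_X^⊥ ⊆ C_Z and C_Z^⊥ ⊆ C_X, with dim C_X = dim C_Z^⊥ + 1 (one encoded logical qubit), and let x ∈ C_Z \ C_X^⊥ and z ∈ C_X \ C_Z^⊥. Then for every subset E ⊆ Fin N, either there exists x' ∈ x + C_X^⊥ with supp(x') ⊆ E, or there exists z' ∈ z + C_Z^⊥ with supp(z') ⊆ Eᶜ. (If a region E does not fully contain any manifestation of the logical X̄, then its complement fully contains a manifestation of the logical Z̄.) -/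
/-!
The dimension count makes `C_X^⊥` a hyperplane of `C_Z`; as `C_X^⊥ ⊆ z^⊥` while `C_Z ⊄ z^⊥`, it is
exactly `C_Z ∩ z^⊥`, and `⟨z, x⟩ = 1`. Given `E`, either some `w ∈ C_Z` supported in `E` has
`⟨z, w⟩ = 1`, and then `w ∈ x + C_X^⊥`; or `z` is orthogonal to `C_Z ∩ F₂^E`, whose dual is
`C_Z^⊥ + F₂^{Eᶜ}`, so `z` is equivalent modulo `C_Z^⊥` to a vector supported in `Eᶜ`.
-/

open Module Submodule

theorem ZMod.ne_zero_iff_eq_one {a : ZMod 2} : a ≠ 0 ↔ a = 1 := by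
  revert a
  decide

section DualCode

variable {N : ℕ}

theorem pairing_eq_dotProduct (u v : Fin N → ZMod 2) : pairing u v = u ⬝ᵥ v := rfl

theorem mem_dualCode {C : Submodule (ZMod 2) (Fin N → ZMod 2)} {u : Fin N → ZMod 2} :
    u ∈ dualCode C ↔ ∀ c ∈ C, pairing u c = 0 :=
  Iff.rfl

theorem dualCode_eq_comap_dualAnnihilator (C : Submodule (ZMod 2) (Fin N → ZMod 2)) :
    dualCode C = C.dualAnnihilator.comap (dotProductEquiv (ZMod 2) (Fin N)).toLinearMap := by
  ext u
  simp [dualCode, mem_dualAnnihilator, pairing_eq_dotProduct]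

theorem dualCode_anti {A C : Submodule (ZMod 2) (Fin N → ZMod 2)} (h : A ≤ C) :
    dualCode C ≤ dualCode A :=
  fun _ hu c hc => hu c (h hc)

theorem finrank_dualCode_add_finrank (C : Submodule (ZMod 2) (Fin N → ZMod 2)) :
    finrank (ZMod 2) (dualCode C) + finrank (ZMod 2) C = N := by
  rw [dualCode_eq_comap_dualAnnihilator, comap_equiv_eq_map_symm, LinearEquiv.finrank_map_eq,
    add_comm, Subspace.finrank_add_finrank_dualAnnihilator_eq, finrank_fin_fun]

theorem dualCode_inf (A C : Submodule (ZMod 2) (Fin N → ZMod 2)) :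
    dualCode (A ⊓ C) = dualCode A ⊔ dualCode C := by
  simp only [dualCode_eq_comap_dualAnnihilator, comap_equiv_eq_map_symm,
    Subspace.dualAnnihilator_inf_eq, Submodule.map_sup]

theorem mem_dualCode_span_singleton {u z : Fin N → ZMod 2} :
    u ∈ dualCode (span (ZMod 2) {z}) ↔ pairing z u = 0 := by
  simp only [mem_dualCode, mem_span_singleton, forall_exists_index, forall_apply_eq_imp_iff,
    pairing_eq_dotProduct, dotProduct_smul, dotProduct_comm u z]
  exact ⟨fun h => by simpa using h 1, fun h a => by rw [h, smul_zero]⟩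

end DualCode

section SupportedOn

variable {N : ℕ}

def supportedOn (E : Set (Fin N)) : Submodule (ZMod 2) (Fin N → ZMod 2) :=
  Submodule.pi Eᶜ fun _ => ⊥

theorem mem_supportedOn {E : Set (Fin N)} {v : Fin N → ZMod 2} :
    v ∈ supportedOn E ↔ ∀ i, v i = 1 → i ∈ E := by
  simp only [supportedOn, mem_pi, Set.mem_compl_iff, mem_bot]
  refine forall_congr' fun i => ?_
  rw [← ZMod.ne_zero_iff_eq_one, not_imp_comm]

theorem dualCode_supportedOn (E : Set (Fin N)) : dualCode (supportedOn E) = supportedOn Eᶜ := by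
  ext u
  simp only [supportedOn, compl_compl, mem_pi, mem_bot]
  constructor
  · intro hu i hi
    have hsingle : Pi.single i 1 ∈ supportedOn E := by
      simp +contextual [supportedOn, mem_pi, ne_of_mem_of_not_mem hi]
    simpa [pairing_eq_dotProduct] using hu _ hsingle
  · intro hu c hc
    refine Finset.sum_eq_zero fun i _ => ?_
    by_cases hi : i ∈ E
    · rw [hu i hi, zero_mul]
    · rw [hc i hi, mul_zero]

end SupportedOn

theorem exists_mem_supportedOn_compl_sub_mem_dualCode {N : ℕ}
    {C : Submodule (ZMod 2) (Fin N → ZMod 2)} {E : Set (Fin N)} {z : Fin N → ZMod 2}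
    (hz : z ∈ dualCode (C ⊓ supportedOn E)) : ∃ z' ∈ supportedOn Eᶜ, z' - z ∈ dualCode C := by
  rw [dualCode_inf, dualCode_supportedOn] at hz
  obtain ⟨c, hc, z', hz', rfl⟩ := mem_sup.1 hz
  exact ⟨z', hz', by simpa using neg_mem hc⟩

theorem dualCode_eq_inf_dualCode_span_singleton {N : ℕ}
    {CX CZ : Submodule (ZMod 2) (Fin N → ZMod 2)} {z : Fin N → ZMod 2}
    (hXZ : dualCode CX ≤ CZ)
    (hdim : finrank (ZMod 2) CX = finrank (ZMod 2) (dualCode CZ) + 1)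
    (hz : z ∈ CX) (hz' : z ∉ dualCode CZ) :
    dualCode CX = CZ ⊓ dualCode (span (ZMod 2) {z}) := by
  have hle : dualCode CX ≤ CZ ⊓ dualCode (span (ZMod 2) {z}) :=
    le_inf hXZ (dualCode_anti ((span_singleton_le_iff_mem z CX).2 hz))
  have hlt : CZ ⊓ dualCode (span (ZMod 2) {z}) < CZ :=
    inf_lt_left.2 fun hCZ => hz' fun c hc => mem_dualCode_span_singleton.1 (hCZ hc)
  refine eq_of_le_of_finrank_le hle ?_
  have := finrank_lt_finrank_of_lt hlt
  have := finrank_dualCode_add_finrank CX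
  have := finrank_dualCode_add_finrank CZ
  omega

theorem css_cleaning_dichotomy_general (N : ℕ)
    (CX CZ : Submodule (ZMod 2) (Fin N → ZMod 2))
    (h1 : dualCode CX ≤ CZ)
    (hdim : Module.finrank (ZMod 2) CX = Module.finrank (ZMod 2) (dualCode CZ) + 1)
    (x z : Fin N → ZMod 2)
    (hx : x ∈ CZ) (hx' : x ∉ dualCode CX)
    (hz : z ∈ CX) (hz' : z ∉ dualCode CZ) :
    ∀ E : Set (Fin N),
      (∃ x' : Fin N → ZMod 2, x' - x ∈ dualCode CX ∧ ∀ i, x' i = 1 → i ∈ E) ∨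
      (∃ z' : Fin N → ZMod 2, z' - z ∈ dualCode CZ ∧ ∀ i, z' i = 1 → i ∈ Eᶜ) := by
  intro E
  have hCX := dualCode_eq_inf_dualCode_span_singleton h1 hdim hz hz'
  have hzx : pairing z x = 1 := by
    rw [← ZMod.ne_zero_iff_eq_one, ne_eq, ← mem_dualCode_span_singleton]
    exact fun h => hx' (hCX ▸ ⟨hx, h⟩)
  by_cases hclean : z ∈ dualCode (CZ ⊓ supportedOn E)
  · obtain ⟨z', hz'E, hsub⟩ := exists_mem_supportedOn_compl_sub_mem_dualCode hclean
    exact .inr ⟨z', hsub, mem_supportedOn.1 hz'E⟩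
  · rw [mem_dualCode] at hclean
    push Not at hclean
    obtain ⟨w, ⟨hwZ, hwE⟩, hzw⟩ := hclean
    refine .inl ⟨w, ?_, mem_supportedOn.1 hwE⟩
    rw [hCX, mem_inf, mem_dualCode_span_singleton]
    refine ⟨sub_mem hwZ hx, ?_⟩
    calc pairing z (w - x) = pairing z w - pairing z x := dotProduct_sub z w x
      _ = 0 := by rw [ZMod.ne_zero_iff_eq_one.1 hzw, hzx, sub_self]

/-- Cleaning dichotomy for [N,1,d] CSS codes: if a region E does not fully contain any
manifestation of the logical X̄, then its complement fully contains a manifestation of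
the logical Z̄. -/
theorem css_cleaning_dichotomy (N : ℕ)
    (CX CZ : Submodule (ZMod 2) (Fin N → ZMod 2))
    (h1 : dualCode CX ≤ CZ) (h2 : dualCode CZ ≤ CX)
    (hdim : Module.finrank (ZMod 2) CX = Module.finrank (ZMod 2) (dualCode CZ) + 1)
    (x z : Fin N → ZMod 2)
    (hx : x ∈ CZ) (hx' : x ∉ dualCode CX)
    (hz : z ∈ CX) (hz' : z ∉ dualCode CZ) :
    ∀ E : Set (Fin N),
      (∃ x' : Fin N → ZMod 2, x' - x ∈ dualCode CX ∧ ∀ i, x' i = 1 → i ∈ E) ∨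
      (∃ z' : Fin N → ZMod 2, z' - z ∈ dualCode CZ ∧ ∀ i, z' i = 1 → i ∈ Eᶜ) :=
  css_cleaning_dichotomy_general N CX CZ h1 hdim x z hx hx' hz hz'
end

section
/- Let C_X, C_Z ⊆ F₂^N be subspaces with C_X^⊥ ⊆ C_Z and C_Z^⊥ ⊆ C_X, with dim C_X = dim C_Z^⊥ + 1 (one encoded logical qubit), and let x ∈ C_Z \ C_X^⊥ and z ∈ C_X \ C_Z^⊥. Call a subset E ⊆ Fin N undecodable if some manifestation of a logical operator is fully erased, i.e. (∃ x' ∈ x + C_X^⊥, supp(x') ⊆ E) ∨ (∃ z' ∈ z + C_Z^⊥, supp(z') ⊆ E), and decodable otherwise. Then the number of decodable subsets E ⊆ Fin N is at most 2^{N−1}. Consequently, for the erasure channel with transmission probability η = 1/2 (each qubit erased independently with probability 1/2, all 2^N erasure patterns equiprobable), the logical transmission probability η_log of such an [N,1,d] CSS code is at most 1/2. -/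
/-- An erasure pattern E is undecodable iff some manifestation of a logical operator is
fully erased. -/
def UndecodablePattern {N : ℕ} (CX CZ : Submodule (ZMod 2) (Fin N → ZMod 2))
    (x z : Fin N → ZMod 2) (E : Set (Fin N)) : Prop :=
  (∃ x' : Fin N → ZMod 2, x' - x ∈ dualCode CX ∧ ∀ i, x' i = 1 → i ∈ E) ∨
  (∃ z' : Fin N → ZMod 2, z' - z ∈ dualCode CZ ∧ ∀ i, z' i = 1 → i ∈ E)

/-!
If no representative of X̄ is covered by E, then some representative of Z̄ is covered by Eᶜ.
Otherwise z ∉ C_Z^⊥ + {v | v = 0 on E}, and duality yields u ∈ C_Z supported in E with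
⟨u, z⟩ = 1. The dimension hypothesis forces C_X^⊥ = C_Z ∩ z^⊥, and ⟨x, z⟩ = 1 as well, so
u ∈ x + C_X^⊥ is a representative of X̄ covered by E. Thus E ↦ Eᶜ injects the decodable
patterns into the undecodable ones, and at most half of the 2^N patterns are decodable.
-/

namespace Set

lemma two_mul_ncard_le_of_compl_notMem {β : Type*} [BooleanAlgebra β] [Finite β] {s : Set β}
    (hs : ∀ a ∈ s, aᶜ ∉ s) : 2 * s.ncard ≤ Nat.card β := by
  have hdisj : Disjoint s (compl '' s) := by
    rw [Set.disjoint_left]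
    rintro a ha ⟨b, hb, rfl⟩
    exact hs b hb ha
  calc 2 * s.ncard = s.ncard + (compl '' s).ncard := by
        rw [ncard_image_of_injective s compl_injective, two_mul]
    _ = (s ∪ compl '' s).ncard := (ncard_union_eq hdisj).symm
    _ ≤ Nat.card β := ncard_le_card _

end Set

namespace LinearMap.BilinForm

variable {K V : Type*} [Field K] [AddCommGroup V] [Module K V] [FiniteDimensional K V]
  {B : LinearMap.BilinForm K V}

lemma exists_mem_orthogonal_apply_ne_zero (hB : B.Nondegenerate) (hB₀ : B.IsRefl)
    {W : Submodule K V} {v : V} (hv : v ∉ W) : ∃ u ∈ B.orthogonal W, B u v ≠ 0 := by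
  by_contra! h
  rw [← orthogonal_orthogonal hB hB₀ W] at hv
  exact hv h

lemma orthogonal_eq_inf_ker_flip (hB : B.Nondegenerate) (hB₀ : B.IsRefl)
    {C C' : Submodule K V} (hle : B.orthogonal C ≤ C')
    (hdim : Module.finrank K C = Module.finrank K (B.orthogonal C') + 1)
    {z : V} (hz : z ∈ C) (hz' : z ∉ B.orthogonal C') :
    B.orthogonal C = C' ⊓ LinearMap.ker (B.flip z) := by
  have hle' : B.orthogonal C ≤ C' ⊓ LinearMap.ker (B.flip z) :=
    fun v hv ↦ ⟨hle hv, hB₀ z v (hv z hz)⟩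
  obtain ⟨c, hc, hcz⟩ : ∃ c ∈ C', B c z ≠ 0 := by
    by_contra! h
    exact hz' h
  have hlt : C' ⊓ LinearMap.ker (B.flip z) < C' := inf_lt_left.mpr fun h ↦ hcz (h hc)
  refine Submodule.eq_of_le_of_finrank_le hle' ?_
  have := Submodule.finrank_lt_finrank_of_lt hlt
  rw [finrank_orthogonal hB] at hdim ⊢
  have := Submodule.finrank_le C
  have := Submodule.finrank_le C'
  omega

end LinearMap.BilinForm

namespace Matrix

variable {K ι : Type*} [Field K] [Fintype ι]

variable (K ι) in
abbrev dotProductBilinForm : LinearMap.BilinForm K (ι → K) := dotProductBilin K K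

lemma dotProductBilinForm_nondegenerate : (dotProductBilinForm K ι).Nondegenerate := by
  classical
  refine ⟨fun u hu ↦ funext fun i ↦ ?_, fun u hu ↦ funext fun i ↦ ?_⟩
  · simpa using hu (Pi.single i 1)
  · simpa using hu (Pi.single i 1)

lemma dotProductBilinForm_isRefl : (dotProductBilinForm K ι).IsRefl :=
  LinearMap.BilinForm.IsSymm.isRefl ⟨fun u v ↦ dotProduct_comm u v⟩

lemma exists_mem_dotProduct_ne_zero_of_notMem_orthogonal_sup_pi {C : Submodule K (ι → K)}
    {E : Set ι} {z : ι → K}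
    (hz : z ∉ (dotProductBilinForm K ι).orthogonal C ⊔ Submodule.pi E fun _ ↦ ⊥) :
    ∃ u ∈ C, (∀ i ∉ E, u i = 0) ∧ u ⬝ᵥ z ≠ 0 := by
  classical
  obtain ⟨u, hu, huz⟩ := LinearMap.BilinForm.exists_mem_orthogonal_apply_ne_zero
    dotProductBilinForm_nondegenerate dotProductBilinForm_isRefl hz
  refine ⟨u, ?_, fun i hi ↦ ?_, huz⟩
  · rw [← LinearMap.BilinForm.orthogonal_orthogonal dotProductBilinForm_nondegenerate
      dotProductBilinForm_isRefl C]
    exact LinearMap.BilinForm.orthogonal_le le_sup_left hu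
  · have hsingle : (Pi.single i 1 : ι → K) ∈ Submodule.pi (R := K) E fun _ ↦ ⊥ := by
      refine Submodule.mem_pi.mpr fun j hj ↦ ?_
      rw [Submodule.mem_bot, Pi.single_eq_of_ne (ne_of_mem_of_not_mem hj hi)]
    simpa using hu _ (Submodule.mem_sup_right hsingle)

end Matrix

lemma dualCode_eq_orthogonal {N : ℕ} (C : Submodule (ZMod 2) (Fin N → ZMod 2)) :
    dualCode C = (Matrix.dotProductBilinForm (ZMod 2) (Fin N)).orthogonal C := by
  ext u
  exact forall₂_congr fun c _ ↦ by rw [pairing, ← dotProduct, dotProduct_comm]; rfl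

lemma undecodablePattern_compl {N : ℕ} {CX CZ : Submodule (ZMod 2) (Fin N → ZMod 2)}
    (h1 : dualCode CX ≤ CZ)
    (hdim : Module.finrank (ZMod 2) CX = Module.finrank (ZMod 2) (dualCode CZ) + 1)
    {x z : Fin N → ZMod 2} (hx : x ∈ CZ) (hx' : x ∉ dualCode CX) (hz : z ∈ CX)
    (hz' : z ∉ dualCode CZ) {E : Set (Fin N)} (hE : ¬ UndecodablePattern CX CZ x z E) :
    UndecodablePattern CX CZ x z Eᶜ := by
  set B := Matrix.dotProductBilinForm (ZMod 2) (Fin N)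
  have hker : dualCode CX = CZ ⊓ LinearMap.ker (B.flip z) := by
    rw [dualCode_eq_orthogonal] at h1 hdim hz' ⊢
    exact LinearMap.BilinForm.orthogonal_eq_inf_ker_flip Matrix.dotProductBilinForm_nondegenerate
      Matrix.dotProductBilinForm_isRefl h1 hdim hz hz'
  have hxz : x ⬝ᵥ z ≠ 0 := fun h ↦ hx' (hker ▸ ⟨hx, h⟩)
  refine Or.inr (by_contra fun hZ ↦ hE (Or.inl ?_))
  have hz_notMem : z ∉ B.orthogonal CZ ⊔ Submodule.pi E fun _ ↦ ⊥ := by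
    intro hmem
    obtain ⟨s, hs, v, hv, rfl⟩ := Submodule.mem_sup.mp hmem
    refine hZ ⟨v, ?_, fun i hi hiE ↦ ?_⟩
    · rw [dualCode_eq_orthogonal, show v - (s + v) = -s by abel]
      exact neg_mem hs
    · rw [(Submodule.mem_bot _).mp (Submodule.mem_pi.mp hv i hiE)] at hi
      exact zero_ne_one hi
  obtain ⟨u, huC, huE, huz⟩ :=
    Matrix.exists_mem_dotProduct_ne_zero_of_notMem_orthogonal_sup_pi hz_notMem
  refine ⟨u, ?_, fun i hi ↦ by_contra fun hiE ↦ by simp [huE i hiE] at hi⟩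
  rw [hker]
  refine ⟨sub_mem huC hx, ?_⟩
  change (u - x) ⬝ᵥ z = 0
  have hF₂ : ∀ a b : ZMod 2, a ≠ 0 → b ≠ 0 → a - b = 0 := by decide
  rw [sub_dotProduct]
  exact hF₂ _ _ huz hxz

theorem css_no_cloning_erasure_bound_general (N : ℕ)
    (CX CZ : Submodule (ZMod 2) (Fin N → ZMod 2))
    (h1 : dualCode CX ≤ CZ)
    (hdim : Module.finrank (ZMod 2) CX = Module.finrank (ZMod 2) (dualCode CZ) + 1)
    (x z : Fin N → ZMod 2)
    (hx : x ∈ CZ) (hx' : x ∉ dualCode CX)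
    (hz : z ∈ CX) (hz' : z ∉ dualCode CZ) :
    Nat.card {E : Set (Fin N) | ¬ UndecodablePattern CX CZ x z E} ≤ 2 ^ (N - 1) ∧
    (Nat.card {E : Set (Fin N) | ¬ UndecodablePattern CX CZ x z E} : ℝ) / 2 ^ N
      ≤ 1 / 2 := by
  have hhalf : 2 * Nat.card {E : Set (Fin N) | ¬ UndecodablePattern CX CZ x z E} ≤ 2 ^ N := by
    simpa using Set.two_mul_ncard_le_of_compl_notMem (s := {E | ¬ UndecodablePattern CX CZ x z E})
      fun E hE hEc ↦ hEc (undecodablePattern_compl h1 hdim hx hx' hz hz' hE)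
  refine ⟨Nat.le_of_mul_le_mul_left (hhalf.trans ?_) two_pos, ?_⟩
  · calc 2 ^ N ≤ 2 ^ (N - 1 + 1) := Nat.pow_le_pow_right two_pos (by omega)
      _ = 2 * 2 ^ (N - 1) := pow_succ' 2 (N - 1)
  · rw [div_le_div_iff₀ (by positivity) two_pos, one_mul, mul_comm]
    exact_mod_cast hhalf

/-- No-cloning bound: at η = 1/2 at most half of the 2^N erasure patterns are decodable,
so the logical transmission probability of an [N,1,d] CSS code is at most 1/2. -/
theorem css_no_cloning_erasure_bound (N : ℕ)
    (CX CZ : Submodule (ZMod 2) (Fin N → ZMod 2))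
    (h1 : dualCode CX ≤ CZ) (h2 : dualCode CZ ≤ CX)
    (hdim : Module.finrank (ZMod 2) CX = Module.finrank (ZMod 2) (dualCode CZ) + 1)
    (x z : Fin N → ZMod 2)
    (hx : x ∈ CZ) (hx' : x ∉ dualCode CX)
    (hz : z ∈ CX) (hz' : z ∉ dualCode CZ) :
    Nat.card {E : Set (Fin N) | ¬ UndecodablePattern CX CZ x z E} ≤ 2 ^ (N - 1) ∧
    (Nat.card {E : Set (Fin N) | ¬ UndecodablePattern CX CZ x z E} : ℝ) / 2 ^ N
      ≤ 1 / 2 :=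
  css_no_cloning_erasure_bound_general N CX CZ h1 hdim x z hx hx' hz hz'
end
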